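/- arXiv:0802.0337 — 11 statements merged into one kernel-verified Lean document; each statement's English description precedes it below -/
import Mathlib

section
/- Given a compact space K and a sequence of continuous maps φⁿ : X_n × K → Y_n with φⁿ({*_n} × K) = {*_n} for each n, the induced map Φ : (⊡_{n∈ω} X_n) × K → ⊡_{n∈ω} Y_n defined by Φ((x_n)_n, y) = (φⁿ(x_n, y))_n is continuous. -/
open Filter Set TopologicalSpace

/-- The box topology on a countable product. -/
def boxTop (X : ℕ → Type*) [∀ n, TopologicalSpace (X n)] :
    TopologicalSpace (∀ n, X n) :=
  TopologicalSpace.generateFrom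
    {S | ∃ U : ∀ n, Set (X n), (∀ n, IsOpen (U n)) ∧ S = Set.univ.pi U}

/-- The topology of the small box product, as a subspace of the box product. -/
def sboxTop (X : ℕ → Type*) [∀ n, TopologicalSpace (X n)] (pt : ∀ n, X n) :
    TopologicalSpace {x : ∀ n, X n // ∀ᶠ n in Filter.atTop, x n = pt n} :=
  (boxTop X).induced Subtype.val

/-!
Fix `(x, k)` and a box `∏ U n` around its image. Continuity of `φ n` gives a rectangle
`V n × W n` around `(x n, k)` mapped into `U n`. For the cofinitely many `n` with `x n = * n`,
`φ n` is constant on the slice `{x n} × K`, and the tube lemma for the compact `K` lets us take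
`W n = K`. Hence `∏ V n × ⋂ W n` is a neighbourhood of `(x, k)`: the intersection is finite.
-/

open Topology

theorem boxTop_pi_mem_nhds {X : ℕ → Type*} [∀ n, TopologicalSpace (X n)] {x : ∀ n, X n}
    {V : ∀ n, Set (X n)} (hV : ∀ n, V n ∈ 𝓝 (x n)) :
    univ.pi V ∈ @nhds _ (boxTop X) x := by
  let := boxTop X
  have hopen : IsOpen (univ.pi fun n => interior (V n)) :=
    GenerateOpen.basic _ ⟨_, fun _ => isOpen_interior, rfl⟩
  exact mem_of_superset (hopen.mem_nhds fun n _ => mem_interior_iff_mem_nhds.2 (hV n))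
    (pi_mono fun _ _ => interior_subset)

theorem boxTop_prod_mem_nhds {X : ℕ → Type*} [∀ n, TopologicalSpace (X n)]
    {K : Type*} [TopologicalSpace K] {x : ∀ n, X n} {k : K} {T : ∀ n, Set (X n × K)}
    (hT : ∀ n, T n ∈ 𝓝 (x n, k)) (hT_tube : ∀ᶠ n in atTop, T n ∈ 𝓝 (x n) ×ˢ (⊤ : Filter K)) :
    {p : (∀ n, X n) × K | ∀ n, (p.1 n, p.2) ∈ T n} ∈
      @nhds _ (@instTopologicalSpaceProd _ _ (boxTop X) _) (x, k) := by
  let := boxTop X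
  obtain ⟨N, hN⟩ := eventually_atTop.1 hT_tube
  have hbox : ∀ n, ∃ V ∈ 𝓝 (x n), ∃ W ∈ 𝓝 k, V ×ˢ W ⊆ T n ∧ (N ≤ n → W = univ) := by
    intro n
    by_cases hn : N ≤ n
    · exact ⟨_, mem_prod_top.1 (hN n hn), univ, univ_mem, fun p hp => hp.1 p.2, fun _ => rfl⟩
    · obtain ⟨V, hV, W, hW, hVW⟩ := mem_nhds_prod_iff.1 (hT n)
      exact ⟨V, hV, W, hW, hVW, fun h => absurd h hn⟩
  choose V hV W hW hVW hW_univ using hbox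
  have hWk : (⋂ n ∈ Finset.range N, W n) ∈ 𝓝 k :=
    (Finset.range N).iInter_mem_sets.2 fun n _ => hW n
  rw [nhds_prod_eq]
  refine mem_of_superset (prod_mem_prod (boxTop_pi_mem_nhds hV) hWk) ?_
  rintro ⟨a, b⟩ ⟨ha, hb⟩ n
  refine hVW n ⟨ha n trivial, ?_⟩
  rcases lt_or_ge n N with hn | hn
  · exact mem_iInter₂.1 hb n (Finset.mem_range.2 hn)
  · exact hW_univ n hn ▸ trivial

theorem continuousAt_boxTop_prod_map {X Y : ℕ → Type*} [∀ n, TopologicalSpace (X n)]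
    [∀ n, TopologicalSpace (Y n)] {K : Type*} [TopologicalSpace K] [CompactSpace K]
    {φ : ∀ n, X n × K → Y n} (hφ : ∀ n, Continuous (φ n)) {x : ∀ n, X n} {k : K}
    (hx : ∀ᶠ n in atTop, ∀ k', φ n (x n, k') = φ n (x n, k)) :
    @ContinuousAt _ _ (@instTopologicalSpaceProd _ _ (boxTop X) _) (boxTop Y)
      (fun p : (∀ n, X n) × K => fun n => φ n (p.1 n, p.2)) (x, k) := by
  let := boxTop X
  refine tendsto_nhds_generateFrom_iff.2 ?_
  rintro _ ⟨U, hU, rfl⟩ hxk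
  have hT : ∀ n k', φ n (x n, k') ∈ U n → φ n ⁻¹' U n ∈ 𝓝 (x n, k') := fun n _ h =>
    (hφ n).continuousAt.preimage_mem_nhds ((hU n).mem_nhds h)
  have hT_tube : ∀ᶠ n in atTop, φ n ⁻¹' U n ∈ 𝓝 (x n) ×ˢ (⊤ : Filter K) := by
    refine hx.mono fun n hn => ?_
    rw [← nhdsSet_univ]
    refine isCompact_univ.mem_prod_nhdsSet_of_forall fun k' _ => ?_
    rw [← nhds_prod_eq]
    exact hT n k' ((hn k').symm ▸ hxk n trivial)
  exact mem_of_superset (boxTop_prod_mem_nhds (fun n => hT n k (hxk n trivial)) hT_tube)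
    fun _ hp n _ => hp n

/-- Given a compact space `K` and continuous maps `φ n : X n × K → Y n` sending
`{* n} × K` to `* n`, the induced map
`Φ : (⊡ₙ X n) × K → ⊡ₙ Y n`, `Φ((xₙ)ₙ, k) = (φ n (xₙ, k))ₙ`, is continuous. -/
theorem smallBox_induced_map_continuous (X Y : ℕ → Type*)
    [∀ n, TopologicalSpace (X n)] [∀ n, TopologicalSpace (Y n)]
    (ptX : ∀ n, X n) (ptY : ∀ n, Y n)
    (K : Type*) [TopologicalSpace K] [CompactSpace K]
    (φ : ∀ n, X n × K → Y n) (hφ : ∀ n, Continuous (φ n))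
    (hpt : ∀ n (k : K), φ n (ptX n, k) = ptY n) :
    @Continuous ({x : ∀ n, X n // ∀ᶠ n in Filter.atTop, x n = ptX n} × K)
      {y : ∀ n, Y n // ∀ᶠ n in Filter.atTop, y n = ptY n}
      (@instTopologicalSpaceProd _ _ (sboxTop X ptX) inferInstance)
      (sboxTop Y ptY)
      (fun p => ⟨fun n => φ n (p.1.val n, p.2),
        p.1.property.mono (fun n hn => by show φ n (p.1.val n, p.2) = ptY n; rw [hn]; exact hpt n p.2)⟩) := by
  let := boxTop X
  let := boxTop Y
  let := sboxTop X ptX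
  let := sboxTop Y ptY
  have hval : Continuous
      (Prod.map Subtype.val id : {x : ∀ n, X n // ∀ᶠ n in atTop, x n = ptX n} × K → _) :=
    continuous_induced_dom.prodMap continuous_id
  refine continuous_induced_rng.2 (continuous_iff_continuousAt.2 fun p => ?_)
  have hslice : ∀ᶠ n in atTop, ∀ k', φ n (p.1.val n, k') = φ n (p.1.val n, p.2) :=
    p.1.property.mono fun n hn k' => by rw [hn, hpt, hpt]
  exact ContinuousAt.comp (f := Prod.map Subtype.val id)
    (continuousAt_boxTop_prod_map hφ hslice) hval.continuousAt
end

section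
/- If for each n ∈ ω the subset A_n is homotopy dense in X_n relative to the base point *_n (i.e., there is a homotopy φ_t : X_n → X_n with φ_0 = id, φ_t(*_n) = *_n for all t, and φ_t(X_n) ⊆ A_n for t ∈ (0,1]), then the small box product ⊡_{n∈ω} A_n is homotopy dense in ⊡_{n∈ω} X_n. -/
/-!
The homotopy on the small box product is the coordinatewise one,
`Φ (x, t) = (φₙ (xₙ, t))ₙ`. Its only subtle property is continuity in the box topology.
Near a point `(x, t)` with `xₙ = *ₙ` for `n ≥ N`, only the finitely many coordinates
`n < N` constrain `t`: for `n ≥ N` the path `φₙ (*ₙ, ·)` is constant, so by the tube lemma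
(the time interval being compact) a neighbourhood of `*ₙ` is mapped into the prescribed open
set at every time.
-/

open Filter Set TopologicalSpace

section BoxTopology

variable {X : ℕ → Type*} [∀ n, TopologicalSpace (X n)]

theorem tendsto_boxTop_iff {α : Type*} {l : Filter α} {f : α → ∀ n, X n} {x : ∀ n, X n} :
    Tendsto f l (@nhds _ (boxTop X) x) ↔
      ∀ U : ∀ n, Set (X n), (∀ n, IsOpen (U n)) → (∀ n, x n ∈ U n) →
        ∀ᶠ a in l, ∀ n, f a n ∈ U n := by
  rw [boxTop, TopologicalSpace.tendsto_nhds_generateFrom_iff]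
  constructor
  · intro hf U hU hx
    exact Eventually.mono (hf _ ⟨U, hU, rfl⟩ fun n _ => hx n) fun a ha n => ha n (mem_univ n)
  · rintro hf _ ⟨U, hU, rfl⟩ hx
    exact (hf U hU fun n => hx n (mem_univ n)).mono fun a ha n _ => ha n

theorem eventually_boxTop_nhds {x : ∀ n, X n} {P : ∀ n, X n → Prop}
    (hP : ∀ n, ∀ᶠ y in nhds (x n), P n y) :
    ∀ᶠ y in @nhds _ (boxTop X) x, ∀ n, P n (y n) := by
  choose U hUP hU hxU using fun n => eventually_nhds_iff.mp (hP n)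
  refine (@eventually_nhds_iff _ (boxTop X) _ _).mpr
    ⟨univ.pi U, fun y hy n => hUP n _ (hy n (mem_univ n)),
      .basic _ ⟨U, hU, rfl⟩, fun n _ => hxU n⟩

theorem continuous_apply_boxTop (n : ℕ) :
    @Continuous _ _ (boxTop X) _ fun x : ∀ n, X n => x n := by
  classical
  refine continuous_def.mpr fun U hU => ?_
  rw [← univ_pi_update_univ]
  refine .basic _ ⟨_, fun m => ?_, rfl⟩
  rcases eq_or_ne m n with rfl | hm
  · simpa
  · simp [hm]

end BoxTopology

section CoordinatewiseHomotopy

open Topology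

variable {X Y : ℕ → Type*} [∀ n, TopologicalSpace (X n)] [∀ n, TopologicalSpace (Y n)]
  {T : Type*} [TopologicalSpace T] [CompactSpace T]
  {φ : ∀ n, X n × T → Y n} {pt : ∀ n, X n}

theorem continuousAt_coordinatewise_boxTop (hφ : ∀ n, Continuous (φ n))
    (hpt : ∀ n t s, φ n (pt n, t) = φ n (pt n, s))
    {x : ∀ n, X n} (hx : ∀ᶠ n in atTop, x n = pt n) (t : T) :
    @ContinuousAt _ _ (@instTopologicalSpaceProd _ _ (boxTop X) _) (boxTop Y)
      (fun p : (∀ n, X n) × T => fun n => φ n (p.1 n, p.2)) (x, t) := by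
  let := boxTop X
  refine tendsto_boxTop_iff.mpr fun U hU hxU => ?_
  obtain ⟨N, hN⟩ := eventually_atTop.mp hx
  have tail : ∀ᶠ y in 𝓝 x, ∀ n, N ≤ n → ∀ s, φ n (y n, s) ∈ U n := by
    refine eventually_boxTop_nhds (P := fun n y => N ≤ n → ∀ s, φ n (y, s) ∈ U n)
      fun n => eventually_imp_distrib_left.mpr fun hn => ?_
    refine (isCompact_univ.eventually_forall_of_forall_eventually fun s _ => ?_).mono
      fun y hy s => hy s (mem_univ s)
    refine (hφ n).continuousAt.preimage_mem_nhds ((hU n).mem_nhds ?_)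
    rw [hN n hn, hpt n s t, ← hN n hn]
    exact hxU n
  have head : ∀ᶠ p in 𝓝 (x, t), ∀ n < N, φ n (p.1 n, p.2) ∈ U n := by
    refine (finite_lt_nat N).eventually_all.mpr fun n _ => ?_
    have hφn : Continuous fun p : (∀ n, X n) × T => φ n (p.1 n, p.2) :=
      (hφ n).comp
        (((continuous_apply_boxTop (X := X) n).comp continuous_fst).prodMk continuous_snd)
    exact hφn.continuousAt.preimage_mem_nhds ((hU n).mem_nhds (hxU n))
  filter_upwards [head, (continuous_fst.tendsto (x, t)).eventually tail] with p hhead htail n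
  exact (lt_or_ge n N).elim (hhead n) fun hn => htail n hn p.2

theorem continuous_coordinatewise_sboxTop (hφ : ∀ n, Continuous (φ n))
    (hpt : ∀ n t s, φ n (pt n, t) = φ n (pt n, s)) :
    @Continuous _ _ (@instTopologicalSpaceProd _ _ (sboxTop X pt) _) (boxTop Y)
      (fun p : {x : ∀ n, X n // ∀ᶠ n in atTop, x n = pt n} × T =>
        fun n => φ n (p.1.val n, p.2)) := by
  let := sboxTop X pt
  let := boxTop X
  let := boxTop Y
  refine continuous_iff_continuousAt.mpr fun p => ?_
  exact (continuousAt_coordinatewise_boxTop hφ hpt p.1.2 p.2).comp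
    (f := Prod.map Subtype.val id) (continuous_subtype_val.prodMap continuous_id).continuousAt

end CoordinatewiseHomotopy

/-- If each `A n` is homotopy dense in `X n` rel. the base point `pt n`, then the small
box product `⊡ₙ A n` is homotopy dense in `⊡ₙ X n`. -/
theorem smallBox_homotopyDense (X : ℕ → Type*) [∀ n, TopologicalSpace (X n)]
    (pt : ∀ n, X n) (A : ∀ n, Set (X n))
    (h : ∀ n, ∃ φ : X n × unitInterval → X n, Continuous φ ∧
      (∀ x, φ (x, 0) = x) ∧ (∀ t, φ (pt n, t) = pt n) ∧
      (∀ x t, t ≠ 0 → φ (x, t) ∈ A n)) :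
    ∃ Φ : {x : ∀ n, X n // ∀ᶠ n in Filter.atTop, x n = pt n} × unitInterval →
          {x : ∀ n, X n // ∀ᶠ n in Filter.atTop, x n = pt n},
      @Continuous _ _ (@instTopologicalSpaceProd _ _ (sboxTop X pt) inferInstance)
        (sboxTop X pt) Φ ∧
      (∀ x, Φ (x, 0) = x) ∧
      (∀ x t, t ≠ 0 → ∀ n, (Φ (x, t)).val n ∈ A n) := by
  choose φ hφ hφ₀ hpt hA using h
  let := sboxTop X pt
  refine ⟨fun p => ⟨fun n => φ n (p.1.val n, p.2), p.1.2.mono fun n hn => by simp only [hn, hpt]⟩,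
    ?_, fun x => Subtype.ext (funext fun n => hφ₀ n _), fun x t ht n => hA n _ t ht⟩
  exact continuous_induced_rng.mpr
    (continuous_coordinatewise_sboxTop hφ fun n t s => by rw [hpt, hpt])
end

section
/- If each pointed space (X_n, *_n) is contractible relative to its base point (i.e., there is a homotopy φ_t : X_n → X_n with φ_0 = id, φ_1 constant, and φ_t(*_n) = *_n for all t), then the small box product ⊡_{n∈ω} X_n is contractible relative to its canonical base point (*_n)_{n∈ω}. -/
/-!
The homotopy is taken coordinatewise, `Φ (x, t) = (φₙ (xₙ, t))ₙ`. A product of infinitely many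
continuous maps is not continuous for the box topology in general, because the time neighbourhoods
needed in the coordinates may shrink to a point. Here only finitely many coordinates of `x` differ
from the base point, and in every other coordinate the contraction fixes `ptₙ` for all times, so
compactness of `[0, 1]` (the tube lemma) yields a neighbourhood of `xₙ` that works for all times
at once.
-/

open Filter Set TopologicalSpace

open Topology

section Tube

variable {Y T Z : Type*} [TopologicalSpace Y] [TopologicalSpace T] [TopologicalSpace Z]
  [CompactSpace T]

theorem exists_isOpen_prod_univ_subset {f : Y × T → Z} (hf : Continuous f) {V : Set Z}
    (hV : IsOpen V) {y : Y} (hy : ∀ t, f (y, t) ∈ V) :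
    ∃ A, IsOpen A ∧ y ∈ A ∧ A ×ˢ univ ⊆ f ⁻¹' V := by
  obtain ⟨A, W, hA, -, hyA, hW, hAW⟩ := generalized_tube_lemma isCompact_singleton isCompact_univ
    (hV.preimage hf) (by rintro ⟨_, t⟩ ⟨rfl, -⟩; exact hy t)
  exact ⟨A, hA, hyA rfl, (prod_mono_right hW).trans hAW⟩

theorem exists_isOpen_prod_subset_of_forall_apply_eq {φ : Y × T → Y} (hφ : Continuous φ)
    {y₀ : Y} (hy₀ : ∀ t, φ (y₀, t) = y₀) {V : Set Y} (hV : IsOpen V) {y : Y} {t : T}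
    (hyt : φ (y, t) ∈ V) :
    ∃ A W, IsOpen A ∧ y ∈ A ∧ W ∈ 𝓝 t ∧ (y = y₀ → W = univ) ∧ A ×ˢ W ⊆ φ ⁻¹' V := by
  by_cases hy : y = y₀
  · subst hy
    obtain ⟨A, hA, hyA, hAV⟩ :=
      exists_isOpen_prod_univ_subset hφ hV fun s => by rw [hy₀] at hyt ⊢; exact hyt
    exact ⟨A, univ, hA, hyA, univ_mem, fun _ => rfl, hAV⟩
  · obtain ⟨A, W, hA, hW, hyA, htW, hAW⟩ := isOpen_prod_iff.1 (hV.preimage hφ) y t hyt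
    exact ⟨A, W, hA, hyA, hW.mem_nhds htW, fun h => absurd h hy, hAW⟩

end Tube

theorem Nat.finite_setOf_ne_of_eventually_eq {X : ℕ → Type*} {x y : ∀ n, X n}
    (h : ∀ᶠ n in atTop, x n = y n) : {n | x n ≠ y n}.Finite := by
  rw [← Nat.cofinite_eq_atTop] at h
  exact eventually_cofinite.1 h

section SmallBox

variable {X : ℕ → Type*} [∀ n, TopologicalSpace (X n)]

theorem isOpen_boxTop_pi {U : ∀ n, Set (X n)} (hU : ∀ n, IsOpen (U n)) :
    IsOpen[boxTop X] (univ.pi U) :=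
  isOpen_generateFrom_of_mem ⟨U, hU, rfl⟩

theorem continuous_boxTop_of_forall_mem_nhds {Z : Type*} [TopologicalSpace Z]
    {F : Z → ∀ n, X n}
    (hF : ∀ z (U : ∀ n, Set (X n)), (∀ n, IsOpen (U n)) → F z ∈ univ.pi U →
      F ⁻¹' univ.pi U ∈ 𝓝 z) :
    Continuous[_, boxTop X] F := by
  refine continuous_generateFrom_iff.2 ?_
  rintro _ ⟨U, hU, rfl⟩
  exact isOpen_iff_mem_nhds.2 fun z hz => hF z U hU hz

variable (pt : ∀ n, X n)

theorem isOpen_sboxTop_preimage_pi {U : ∀ n, Set (X n)} (hU : ∀ n, IsOpen (U n)) :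
    IsOpen[sboxTop X pt] (Subtype.val ⁻¹' univ.pi U) :=
  ⟨_, isOpen_boxTop_pi hU, rfl⟩

def smallBoxMap {T : Type*} (φ : ∀ n, X n × T → X n) (hφ : ∀ n t, φ n (pt n, t) = pt n)
    (p : {x : ∀ n, X n // ∀ᶠ n in atTop, x n = pt n} × T) :
    {x : ∀ n, X n // ∀ᶠ n in atTop, x n = pt n} :=
  ⟨fun n => φ n (p.1.1 n, p.2), p.1.2.mono fun n hn => by simp only [hn, hφ]⟩

theorem continuous_smallBoxMap {T : Type*} [TopologicalSpace T] [CompactSpace T]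
    {φ : ∀ n, X n × T → X n} (hφ : ∀ n t, φ n (pt n, t) = pt n) (hc : ∀ n, Continuous (φ n)) :
    Continuous[@instTopologicalSpaceProd _ T (sboxTop X pt) _, sboxTop X pt]
      (smallBoxMap pt φ hφ) := by
  let _ := sboxTop X pt
  refine continuous_induced_rng.2 (continuous_boxTop_of_forall_mem_nhds fun ⟨x, t⟩ U hU hxt => ?_)
  choose A W hA hxA hW hW_univ hAW using fun n =>
    exists_isOpen_prod_subset_of_forall_apply_eq (hc n) (hφ n) (hU n) (hxt n (mem_univ n))
  have hA_nhds : Subtype.val ⁻¹' univ.pi A ∈ 𝓝 x :=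
    (isOpen_sboxTop_preimage_pi pt hA).mem_nhds fun n _ => hxA n
  have hW_nhds : ⋂ n ∈ {n | x.1 n ≠ pt n}, W n ∈ 𝓝 t :=
    (biInter_mem (Nat.finite_setOf_ne_of_eventually_eq x.2)).2 fun n _ => hW n
  filter_upwards [prod_mem_nhds hA_nhds hW_nhds]
  rintro ⟨y, s⟩ ⟨hy, hs⟩ n -
  refine hAW n ⟨hy n (mem_univ n), ?_⟩
  by_cases hn : x.1 n = pt n
  · simp only [hW_univ n hn, mem_univ]
  · exact mem_iInter₂.1 hs n hn

end SmallBox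

/-- If each pointed space `(X n, pt n)` is contractible rel. its base point, then the
small box product `⊡ₙ X n` is contractible rel. its canonical base point `(pt n)ₙ`. -/
theorem smallBox_contractible (X : ℕ → Type*) [∀ n, TopologicalSpace (X n)]
    (pt : ∀ n, X n)
    (h : ∀ n, ∃ φ : X n × unitInterval → X n, Continuous φ ∧
      (∀ x, φ (x, 0) = x) ∧ (∀ t, φ (pt n, t) = pt n) ∧
      (∀ x, φ (x, 1) = pt n)) :
    ∃ Φ : {x : ∀ n, X n // ∀ᶠ n in Filter.atTop, x n = pt n} × unitInterval →
          {x : ∀ n, X n // ∀ᶠ n in Filter.atTop, x n = pt n},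
      @Continuous _ _ (@instTopologicalSpaceProd _ _ (sboxTop X pt) inferInstance)
        (sboxTop X pt) Φ ∧
      (∀ x, Φ (x, 0) = x) ∧
      (∀ t, Φ (⟨pt, Filter.Eventually.of_forall fun _ => rfl⟩, t)
          = ⟨pt, Filter.Eventually.of_forall fun _ => rfl⟩) ∧
      (∀ x, Φ (x, 1) = ⟨pt, Filter.Eventually.of_forall fun _ => rfl⟩) := by
  choose φ hc h0 hp h1 using h
  exact ⟨smallBoxMap pt φ hp, continuous_smallBoxMap pt hp hc,
    fun x => Subtype.ext (funext fun n => h0 n _),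
    fun t => Subtype.ext (funext fun n => hp n t),
    fun x => Subtype.ext (funext fun n => h1 n _)⟩
end

section
/- If a topological group G is semi-locally contractible at its identity e (i.e., e has a neighborhood V that is contractible in G), then G is strongly locally contractible at every point; in particular every neighborhood U of e contains a neighborhood V of e admitting a homotopy in U contracting V to e while fixing e throughout. -/
open Filter Set TopologicalSpace

open scoped Topology unitInterval

/-! Translating by `g` moves the contraction of a neighborhood of `1` to one of a neighborhood
of `g`. Multiplying it on the left by `g * H (g, t)⁻¹` keeps its ends and pins `g` for all
times. Since `[0, 1]` is compact, the tube lemma then shrinks its domain so that the whole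
homotopy stays inside a given neighborhood `U` of `g`. -/

def SemilocallyContractibleAt (X : Type*) [TopologicalSpace X] (x : X) : Prop :=
  ∃ V ∈ 𝓝 x, ∃ H : V × I → X, Continuous H ∧
    (∀ v : V, H (v, 0) = v) ∧ ∃ c : X, ∀ v : V, H (v, 1) = c

theorem Homeomorph.semilocallyContractibleAt {X Y : Type*} [TopologicalSpace X]
    [TopologicalSpace Y] (e : X ≃ₜ Y) {x : X} (h : SemilocallyContractibleAt X x) :
    SemilocallyContractibleAt Y (e x) := by
  obtain ⟨V, hV, H, hH, hH₀, c, hH₁⟩ := h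
  refine ⟨e.symm ⁻¹' V, ?_, fun p => e (H (⟨e.symm p.1, p.1.2⟩, p.2)), ?_, ?_, e c, ?_⟩
  · exact e.symm.continuous.continuousAt.preimage_mem_nhds (by rwa [e.symm_apply_apply])
  · fun_prop
  · intro v
    simp [hH₀]
  · intro v
    simp [hH₁]

theorem SemilocallyContractibleAt.of_one {G : Type*} [Group G] [TopologicalSpace G]
    [ContinuousMul G] (h : SemilocallyContractibleAt G 1) (g : G) :
    SemilocallyContractibleAt G g := by
  simpa using (Homeomorph.mulLeft g).semilocallyContractibleAt h

theorem exists_contraction_fixing_of_contraction {G : Type*} [Group G] [TopologicalSpace G]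
    [ContinuousMul G] [ContinuousInv G] {V : Set G} {x : G} (hx : x ∈ V) {H : V × I → G}
    (hH : Continuous H) (hH₀ : ∀ v : V, H (v, 0) = v) {c : G} (hH₁ : ∀ v : V, H (v, 1) = c) :
    ∃ K : V × I → G, Continuous K ∧ (∀ v : V, K (v, 0) = v) ∧
      (∀ t : I, K (⟨x, hx⟩, t) = x) ∧ ∀ v : V, K (v, 1) = x := by
  refine ⟨fun p => x * (H (⟨x, hx⟩, p.2))⁻¹ * H p, by fun_prop, ?_, ?_, ?_⟩
  · intro v
    simp [hH₀]
  · intro t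
    simp
  · intro v
    simp [hH₁]

theorem exists_mem_nhds_forall_mem_of_continuous {X Y Z : Type*} [TopologicalSpace X]
    [TopologicalSpace Y] [TopologicalSpace Z] [CompactSpace Y] {V : Set X} {x : X}
    (hV : V ∈ 𝓝 x) {K : V × Y → Z} (hK : Continuous K) {U : Set Z} (hU : IsOpen U)
    (hxU : ∀ t : Y, K (⟨x, mem_of_mem_nhds hV⟩, t) ∈ U) :
    ∃ W ∈ 𝓝 x, ∃ hWV : W ⊆ V, ∀ (w : W) (t : Y), K (inclusion hWV w, t) ∈ U := by
  have hN : ∀ᶠ v in 𝓝 (⟨x, mem_of_mem_nhds hV⟩ : V), ∀ t ∈ univ, K (v, t) ∈ U :=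
    isCompact_univ.eventually_forall_of_forall_eventually fun t _ =>
      hK.continuousAt.eventually_mem (hU.mem_nhds (hxU t))
  refine ⟨Subtype.val '' {v | ∀ t ∈ univ, K (v, t) ∈ U}, ?_, by simp, ?_⟩
  · rw [← map_nhds_subtype_coe_eq_nhds (mem_of_mem_nhds hV) hV]
    exact image_mem_map hN
  · rintro ⟨-, v, hv, rfl⟩ t
    exact hv t (mem_univ t)

/-- If a topological group `G` is semi-locally contractible at the identity (the identity
has a neighborhood contractible in `G`), then `G` is strongly locally contractible at
every point: every neighborhood `U` of any `g ∈ G` contains a neighborhood `V` of `g`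
admitting a homotopy in `U` contracting `V` to `g` which fixes `g` throughout. -/
theorem topologicalGroup_strongly_locally_contractible (G : Type*) [Group G]
    [TopologicalSpace G] [IsTopologicalGroup G]
    (h : ∃ V ∈ nhds (1 : G), ∃ H : V × unitInterval → G, Continuous H ∧
      (∀ v : V, H (v, 0) = v) ∧ ∃ c : G, ∀ v : V, H (v, 1) = c) :
    ∀ g : G, ∀ U ∈ nhds g, ∃ V ∈ nhds g, V ⊆ U ∧
      ∃ φ : V × unitInterval → G, Continuous φ ∧
        (∀ (v : V) (t : unitInterval), φ (v, t) ∈ U) ∧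
        (∀ v : V, φ (v, 0) = v) ∧
        (∀ (t : unitInterval) (hg : g ∈ V), φ (⟨g, hg⟩, t) = g) ∧
        (∀ v : V, φ (v, 1) = g) := by
  intro g U hU
  obtain ⟨V, hV, H, hH, hH₀, c, hH₁⟩ := SemilocallyContractibleAt.of_one h g
  obtain ⟨K, hK, hK₀, hKg, hK₁⟩ :=
    exists_contraction_fixing_of_contraction (mem_of_mem_nhds hV) hH hH₀ hH₁
  obtain ⟨W, hW, hWV, hKW⟩ := exists_mem_nhds_forall_mem_of_continuous hV hK isOpen_interior
    fun t => by rw [hKg]; exact mem_interior_iff_mem_nhds.2 hU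
  refine ⟨W, hW, fun w hw => ?_, fun p => K (inclusion hWV p.1, p.2),
    hK.comp ((continuous_inclusion hWV).prodMap continuous_id),
    fun w t => interior_subset (hKW w t), fun w => hK₀ _, fun t _ => hKg t, fun w => hK₁ _⟩
  simpa [hK₀] using interior_subset (hKW ⟨w, hw⟩ 0)
end

section
/- For a paracompact Hausdorff space M, the homeomorphism group H(M) endowed with the Whitney topology is a topological group: both composition and inversion are continuous. -/
/-!
If `f ∈ 𝒰(h)`, then `𝒱(f) ⊆ 𝒰(h)` for the open cover `𝒱 = {U ∩ (h ∘ f⁻¹)⁻¹ U : U ∈ 𝒰}`, so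
continuity of a map `φ` into `H(M)` at `x` only has to be tested against the sets `𝒲(φ x)`.

Inversion: if `g ∈ 𝒱(f)` for `𝒱 = {f W : W ∈ 𝒲}`, then `g⁻¹ ∈ 𝒲(f⁻¹)`.

Composition: let `𝒱` be a barycentric refinement of `𝒲`. Since a paracompact Hausdorff space is
normal, a locally finite refinement `v` of `𝒲` shrinks to a cover `t` with `closure (t U) ⊆ v U`
and `closure ∘ t` still locally finite; the open sets `V` that meet `closure (t U)` only if
`V ⊆ v U` then form one. If `g₁ ∈ 𝒱(f₁)` and `g₂ ∈ 𝒱'(f₂)` for `𝒱' = {f₁⁻¹ V : V ∈ 𝒱}`, then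
for each `x` two members of `𝒱` pass through `f₁ (g₂ x)`, one containing `f₁ (f₂ x)` and the
other `g₁ (g₂ x)`; both lie in one member of `𝒲`.
-/

open Filter Set TopologicalSpace

/-- `h` and `g` are `𝒰`-near. -/
def UNear {M : Type*} [TopologicalSpace M] (h g : M ≃ₜ M) (𝒰 : Set (Set M)) : Prop :=
  ∀ x : M, ∃ U ∈ 𝒰, h x ∈ U ∧ g x ∈ U

/-- `𝒰` is an open cover of `M`. -/
def IsOpenCover {M : Type*} [TopologicalSpace M] (𝒰 : Set (Set M)) : Prop :=
  (∀ U ∈ 𝒰, IsOpen U) ∧ ⋃₀ 𝒰 = Set.univ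

/-- The Whitney topology on the homeomorphism group of `M`, generated by the sets
`𝒰(h) = {g : (h,g) ≺ 𝒰}` for `h ∈ H(M)` and open covers `𝒰` of `M`. -/
def whitney (M : Type*) [TopologicalSpace M] : TopologicalSpace (M ≃ₜ M) :=
  TopologicalSpace.generateFrom
    {S | ∃ h : M ≃ₜ M, ∃ 𝒰 : Set (Set M), IsOpenCover 𝒰 ∧ S = {g | UNear h g 𝒰}}

open Topology

def IsBarycentricRefinement {M : Type*} (𝒱 𝒰 : Set (Set M)) : Prop :=
  ∀ x, ∃ U ∈ 𝒰, ∀ V ∈ 𝒱, x ∈ V → V ⊆ U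

section OpenCover

variable {M : Type*} [TopologicalSpace M] {𝒰 : Set (Set M)}

theorem IsOpenCover.exists_mem (h𝒰 : IsOpenCover 𝒰) (x : M) : ∃ U ∈ 𝒰, x ∈ U :=
  mem_sUnion.1 (h𝒰.2.symm ▸ mem_univ x)

theorem IsOpenCover.preimage {N : Type*} [TopologicalSpace N] (h𝒰 : IsOpenCover 𝒰)
    {f : N → M} (hf : Continuous f) : IsOpenCover ((f ⁻¹' ·) '' 𝒰) := by
  refine ⟨?_, eq_univ_of_forall fun x => ?_⟩
  · rintro _ ⟨U, hU, rfl⟩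
    exact (h𝒰.1 U hU).preimage hf
  · obtain ⟨U, hU, hxU⟩ := h𝒰.exists_mem (f x)
    exact ⟨_, ⟨U, hU, rfl⟩, hxU⟩

theorem IsOpenCover.exists_isBarycentricRefinement [ParacompactSpace M] [NormalSpace M]
    (h𝒰 : IsOpenCover 𝒰) : ∃ 𝒱 : Set (Set M), IsOpenCover 𝒱 ∧ IsBarycentricRefinement 𝒱 𝒰 := by
  obtain ⟨v, hvo, hvcov, hvlf, hvU⟩ := precise_refinement (fun U : 𝒰 => (U : Set M))
    (fun U => h𝒰.1 U U.2) (by rw [← sUnion_eq_iUnion, h𝒰.2])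
  obtain ⟨t, htcov, -, htv⟩ := exists_iUnion_eq_closure_subset hvo hvlf.point_finite hvcov
  have htlf : LocallyFinite fun U => closure (t U) :=
    (hvlf.subset fun U => subset_closure.trans (htv U)).closure
  refine ⟨{V | IsOpen V ∧ ∀ U, (V ∩ closure (t U)).Nonempty → V ⊆ v U},
    ⟨fun V hV => hV.1, eq_univ_of_forall fun x => ?_⟩, fun x => ?_⟩
  · have hN : (⋂ U ∈ {U | x ∈ closure (t U)}, v U) ∩
        ⋂ U, ⋂ (_ : x ∉ closure (t U)), (closure (t U))ᶜ ∈ 𝓝 x :=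
      inter_mem ((biInter_mem (htlf.point_finite x)).2 fun U hU => (hvo U).mem_nhds (htv U hU))
        (htlf.iInter_compl_mem_nhds (fun _ => isClosed_closure) x)
    obtain ⟨V, hVN, hVo, hxV⟩ := mem_nhds_iff.1 hN
    refine ⟨V, ⟨hVo, fun U ⟨y, hyV, hyU⟩ => ?_⟩, hxV⟩
    have hxU : x ∈ closure (t U) := by
      by_contra hxU
      exact mem_iInter₂.1 (hVN hyV).2 U hxU hyU
    exact fun z hz => mem_iInter₂.1 (hVN hz).1 U hxU
  · obtain ⟨U, hxU⟩ := mem_iUnion.1 (htcov.symm ▸ mem_univ x)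
    exact ⟨U, U.2, fun V hV hxV => (hV.2 U ⟨x, hxV, subset_closure hxU⟩).trans (hvU U)⟩

end OpenCover

section Whitney

variable {M : Type*} [TopologicalSpace M] {𝒰 𝒲 : Set (Set M)}

theorem UNear.refl (f : M ≃ₜ M) (h𝒰 : IsOpenCover 𝒰) : UNear f f 𝒰 := fun x => by
  obtain ⟨U, hU, hxU⟩ := h𝒰.exists_mem (f x)
  exact ⟨U, hU, hxU, hxU⟩

theorem UNear.exists_isOpenCover_forall_uNear {h f : M ≃ₜ M} (hf : UNear h f 𝒰)
    (h𝒰 : IsOpenCover 𝒰) : ∃ 𝒱 : Set (Set M), IsOpenCover 𝒱 ∧ ∀ g, UNear f g 𝒱 → UNear h g 𝒰 := by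
  refine ⟨(fun U => U ∩ (f.symm.trans h) ⁻¹' U) '' 𝒰, ⟨?_, eq_univ_of_forall fun y => ?_⟩, ?_⟩
  · rintro _ ⟨U, hU, rfl⟩
    exact (h𝒰.1 U hU).inter ((h𝒰.1 U hU).preimage (map_continuous _))
  · obtain ⟨U, hU, hhU, hfU⟩ := hf (f.symm y)
    exact ⟨_, ⟨U, hU, rfl⟩, by simpa using hfU, hhU⟩
  · intro g hg x
    obtain ⟨_, ⟨U, hU, rfl⟩, hfx, hgx⟩ := hg x
    exact ⟨U, hU, by simpa using hfx.2, hgx.1⟩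

theorem eventually_uNear_whitney (f : M ≃ₜ M) (h𝒰 : IsOpenCover 𝒰) :
    ∀ᶠ g in @nhds _ (whitney M) f, UNear f g 𝒰 :=
  @IsOpen.mem_nhds _ (whitney M) _ _ (GenerateOpen.basic _ ⟨f, 𝒰, h𝒰, rfl⟩) (UNear.refl f h𝒰)

theorem continuous_whitney_of_eventually_uNear {X : Type*} [TopologicalSpace X]
    {φ : X → M ≃ₜ M} (hφ : ∀ x, ∀ 𝒲 : Set (Set M), IsOpenCover 𝒲 → ∀ᶠ y in 𝓝 x, UNear (φ x) (φ y) 𝒲) :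
    @Continuous X (M ≃ₜ M) _ (whitney M) φ := by
  refine continuous_generateFrom_iff.2 ?_
  rintro _ ⟨h, 𝒰, h𝒰, rfl⟩
  refine isOpen_iff_mem_nhds.2 fun x hx => ?_
  obtain ⟨𝒱, h𝒱, hsub⟩ := UNear.exists_isOpenCover_forall_uNear hx h𝒰
  exact (hφ x 𝒱 h𝒱).mono fun y hy => hsub _ hy

theorem exists_isOpenCover_uNear_symm (h𝒲 : IsOpenCover 𝒲) (f : M ≃ₜ M) :
    ∃ 𝒱 : Set (Set M), IsOpenCover 𝒱 ∧ ∀ g, UNear f g 𝒱 → UNear f.symm g.symm 𝒲 := by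
  refine ⟨_, h𝒲.preimage f.symm.continuous, fun g hg x => ?_⟩
  obtain ⟨_, ⟨W, hW, rfl⟩, hfW, hgW⟩ := hg (g.symm x)
  exact ⟨W, hW, by simpa using hgW, by simpa using hfW⟩

theorem exists_isOpenCover_uNear_trans [ParacompactSpace M] [NormalSpace M]
    (h𝒲 : IsOpenCover 𝒲) (f₁ f₂ : M ≃ₜ M) :
    ∃ 𝒱₁ 𝒱₂ : Set (Set M), IsOpenCover 𝒱₁ ∧ IsOpenCover 𝒱₂ ∧
      ∀ g₁ g₂, UNear f₁ g₁ 𝒱₁ → UNear f₂ g₂ 𝒱₂ → UNear (f₂.trans f₁) (g₂.trans g₁) 𝒲 := by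
  obtain ⟨𝒱, h𝒱, hbar⟩ := h𝒲.exists_isBarycentricRefinement
  refine ⟨𝒱, _, h𝒱, h𝒱.preimage f₁.continuous, fun g₁ g₂ hg₁ hg₂ x => ?_⟩
  obtain ⟨_, ⟨V₂, hV₂, rfl⟩, hf₂V₂, hg₂V₂⟩ := hg₂ x
  obtain ⟨V₁, hV₁, hf₁V₁, hg₁V₁⟩ := hg₁ (g₂ x)
  obtain ⟨W, hW, hstar⟩ := hbar (f₁ (g₂ x))
  exact ⟨W, hW, hstar V₂ hV₂ hg₂V₂ hf₂V₂, hstar V₁ hV₁ hf₁V₁ hg₁V₁⟩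

end Whitney

/-- For a paracompact Hausdorff space `M`, the homeomorphism group `H(M)` with the
Whitney topology is a topological group: composition and inversion are continuous. -/
theorem whitney_topologicalGroup (M : Type*) [TopologicalSpace M]
    [ParacompactSpace M] [T2Space M] :
    @Continuous ((M ≃ₜ M) × (M ≃ₜ M)) (M ≃ₜ M)
      (@instTopologicalSpaceProd _ _ (whitney M) (whitney M)) (whitney M)
      (fun p => p.2.trans p.1) ∧
    @Continuous (M ≃ₜ M) (M ≃ₜ M) (whitney M) (whitney M) Homeomorph.symm := by
  let _ := whitney M
  refine ⟨continuous_whitney_of_eventually_uNear fun p 𝒲 h𝒲 => ?_,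
    continuous_whitney_of_eventually_uNear fun f 𝒲 h𝒲 => ?_⟩
  · obtain ⟨𝒱₁, 𝒱₂, h𝒱₁, h𝒱₂, hcomp⟩ := exists_isOpenCover_uNear_trans h𝒲 p.1 p.2
    rw [nhds_prod_eq]
    exact ((eventually_uNear_whitney p.1 h𝒱₁).prod_mk (eventually_uNear_whitney p.2 h𝒱₂)).mono
      fun q hq => hcomp _ _ hq.1 hq.2
  · obtain ⟨𝒱, h𝒱, hsymm⟩ := exists_isOpenCover_uNear_symm h𝒲 f
    exact (eventually_uNear_whitney f h𝒱).mono hsymm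
end

section
/- For a topological space M and a homeomorphism h of M, the family of sets U(h) = {g ∈ H(M) : (h,g) ≺ U}, where U ranges over open covers of M, is a neighborhood basis at h for the graph topology on H(M) (the topology with subbasic open sets {f : Γ_f ⊆ W} for W open in M × M, where Γ_f is the graph of f). -/
open Filter Set TopologicalSpace

/-- The graph topology on the homeomorphism group of `M`: generated by the sets
`Γ_W = {f : Γ_f ⊆ W}` for `W` open in `M × M`, where `Γ_f` is the graph of `f`. -/
def graphTop (M : Type*) [TopologicalSpace M] : TopologicalSpace (M ≃ₜ M) :=
  TopologicalSpace.generateFrom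
    {S | ∃ W : Set (M × M), IsOpen W ∧ S = {f : M ≃ₜ M | ∀ x, (x, f x) ∈ W}}

/-!
A basic neighbourhood `{g : Γ_g ⊆ W}` of `h` and a basic set `{g : (h, g) ≺ 𝒰}` are translated
into each other by the correspondence between open sets `W ⊇ Γ_h` and open covers `𝒰`:
`W` gives the cover by the open `U` with `h⁻¹(U) × U ⊆ W`, and `𝒰` gives `W = ⋃_{U ∈ 𝒰} h⁻¹(U) × U`,
for which `Γ_g ⊆ W` says exactly that `(h, g) ≺ 𝒰`.
-/

namespace GraphTopology

variable {M : Type*} [TopologicalSpace M]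

def graphSubset (W : Set (M × M)) : Set (M ≃ₜ M) := {f | ∀ x, (x, f x) ∈ W}

theorem graphSubset_inter (W₁ W₂ : Set (M × M)) :
    graphSubset (W₁ ∩ W₂) = graphSubset W₁ ∩ graphSubset W₂ :=
  ext fun _ => forall_and

theorem nhds_graphTop_hasBasis (h : M ≃ₜ M) :
    (@nhds (M ≃ₜ M) (graphTop M) h).HasBasis
      (fun W : Set (M × M) => IsOpen W ∧ h ∈ graphSubset W) graphSubset := by
  have directed : DirectedOn (id ⁻¹'o (· ≥ ·))
      {S | h ∈ S ∧ ∃ W : Set (M × M), IsOpen W ∧ S = graphSubset W} := by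
    rintro _ ⟨hW₁, W₁, oW₁, rfl⟩ _ ⟨hW₂, W₂, oW₂, rfl⟩
    have hW : h ∈ graphSubset (W₁ ∩ W₂) := (graphSubset_inter W₁ W₂).ge ⟨hW₁, hW₂⟩
    exact ⟨_, ⟨hW, _, oW₁.inter oW₂, rfl⟩, subset_inter_iff.1 (graphSubset_inter W₁ W₂).le⟩
  have mem_univ_graph : h ∈ graphSubset (univ : Set (M × M)) := fun _ => trivial
  rw [graphTop, nhds_generateFrom]
  refine (hasBasis_biInf_principal directed ⟨_, mem_univ_graph, univ, isOpen_univ, rfl⟩).to_hasBasis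
    ?_ ?_
  · rintro _ ⟨hW, W, oW, rfl⟩
    exact ⟨W, ⟨oW, hW⟩, subset_rfl⟩
  · rintro W ⟨oW, hW⟩
    exact ⟨graphSubset W, ⟨hW, W, oW, rfl⟩, subset_rfl⟩

def nearCover (h : M ≃ₜ M) (W : Set (M × M)) : Set (Set M) :=
  {U | IsOpen U ∧ (h ⁻¹' U) ×ˢ U ⊆ W}

theorem isOpenCover_nearCover {h : M ≃ₜ M} {W : Set (M × M)} (oW : IsOpen W)
    (hW : h ∈ graphSubset W) : IsOpenCover (nearCover h W) := by
  refine ⟨fun U hU => hU.1, eq_univ_of_forall fun y => ?_⟩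
  obtain ⟨x, rfl⟩ := h.surjective y
  obtain ⟨A, B, oA, oB, hxA, hxB, hAB⟩ := isOpen_prod_iff.1 oW x (h x) (hW x)
  refine ⟨B ∩ h '' A, ⟨oB.inter (h.isOpenMap A oA), ?_⟩, hxB, x, hxA, rfl⟩
  rintro ⟨x', y'⟩ ⟨⟨-, hx'⟩, hy', -⟩
  exact hAB ⟨h.injective.mem_set_image.1 hx', hy'⟩

theorem uNear_nearCover_subset (h : M ≃ₜ M) (W : Set (M × M)) :
    {g | UNear h g (nearCover h W)} ⊆ graphSubset W := fun g hg x => by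
  obtain ⟨U, ⟨-, hUW⟩, hhx, hgx⟩ := hg x
  exact hUW ⟨hhx, hgx⟩

def nearSet (h : M ≃ₜ M) (𝒰 : Set (Set M)) : Set (M × M) :=
  ⋃ U ∈ 𝒰, (h ⁻¹' U) ×ˢ U

theorem graphSubset_nearSet (h : M ≃ₜ M) (𝒰 : Set (Set M)) :
    graphSubset (nearSet h 𝒰) = {g | UNear h g 𝒰} := by
  ext g
  simp only [graphSubset, nearSet, UNear, mem_iUnion₂, mem_prod, mem_preimage,
    exists_prop]

theorem isOpen_nearSet (h : M ≃ₜ M) {𝒰 : Set (Set M)} (h𝒰 : ∀ U ∈ 𝒰, IsOpen U) :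
    IsOpen (nearSet h 𝒰) :=
  isOpen_biUnion fun U hU => ((h𝒰 U hU).preimage h.continuous).prod (h𝒰 U hU)

theorem mem_graphSubset_nearSet {𝒰 : Set (Set M)} (h𝒰 : ⋃₀ 𝒰 = univ) (h : M ≃ₜ M) :
    h ∈ graphSubset (nearSet h 𝒰) := by
  rw [graphSubset_nearSet]
  intro x
  obtain ⟨U, hU, hxU⟩ := mem_sUnion.1 (h𝒰.symm ▸ mem_univ (h x))
  exact ⟨U, hU, hxU, hxU⟩

end GraphTopology

open GraphTopology in
/-- For any topological space `M` and any homeomorphism `h` of `M`, the sets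
`𝒰(h) = {g : (h,g) ≺ 𝒰}`, where `𝒰` runs over open covers of `M`, form a neighborhood
basis at `h` for the graph topology on `H(M)`. -/
theorem graphTop_nhds_basis (M : Type*) [TopologicalSpace M] (h : M ≃ₜ M) :
    (@nhds (M ≃ₜ M) (graphTop M) h).HasBasis _root_.IsOpenCover
      (fun 𝒰 => {g : M ≃ₜ M | UNear h g 𝒰}) := by
  refine (nhds_graphTop_hasBasis h).to_hasBasis ?_ ?_
  · rintro W ⟨oW, hW⟩
    exact ⟨nearCover h W, isOpenCover_nearCover oW hW, uNear_nearCover_subset h W⟩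
  · rintro 𝒰 ⟨h𝒰_open, h𝒰_cover⟩
    exact ⟨nearSet h 𝒰, ⟨isOpen_nearSet h h𝒰_open, mem_graphSubset_nearSet h𝒰_cover h⟩,
      (graphSubset_nearSet h 𝒰).le⟩
end

section
/- Let M be a paracompact Hausdorff space. Then the identity path-component (indeed the connected component of the identity) of H(M) with the Whitney topology is contained in the subgroup H_c(M) of homeomorphisms with compact support; equivalently, every homeomorphism of M with non-compact support can be separated from id_M by a clopen subset of H(M). -/
/-! A homeomorphism `h` with non-compact support moves every point of a closed discrete sequence
`xₙ`, i.e. one whose singletons form a locally finite family. Urysohn functions with `φₙ xₙ = 0`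
and `φₙ (h xₙ) = 1` give the condition `φₙ (g xₙ) → 0` on homeomorphisms `g`. Since the `xₙ` are
locally finite, one Whitney neighbourhood of `g` keeps every `φₙ (f xₙ)` within `1 / (n + 1)` of
`φₙ (g xₙ)`, so this condition is locally constant in `g`: it cuts out a clopen set containing
the identity but not `h`. -/
open Filter Set TopologicalSpace Topology

attribute [local instance] whitney

section

variable {M : Type*} [TopologicalSpace M]

lemma exists_seq_mem_locallyFinite_of_not_isCompact_closure [ParacompactSpace M] {A : Set M}
    (hA : ¬ IsCompact (closure A)) :
    ∃ x : ℕ → M, (∀ n, x n ∈ A) ∧ LocallyFinite fun n => ({x n} : Set M) := by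
  rw [isCompact_iff_finite_subcover] at hA
  push Not at hA
  obtain ⟨ι, U, hUo, hAU, hfin⟩ := hA
  obtain ⟨v, hvo, hAv, hvlf, hvU⟩ := precise_refinement_set isClosed_closure U hUo hAU
  have hinf : {i | (v i ∩ A).Nonempty}.Infinite := by
    intro hI
    refine hfin hI.toFinset fun z hz => ?_
    obtain ⟨i, hzi⟩ := mem_iUnion.1 (hAv hz)
    have hiA : (v i ∩ A).Nonempty := mem_closure_iff.1 hz _ (hvo i) hzi
    exact mem_iUnion₂.2 ⟨i, hI.mem_toFinset.2 hiA, hvU i hzi⟩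
  let e := hinf.natEmbedding
  choose x hxv hxA using fun n => (e n).2
  exact ⟨x, hxA, (hvlf.comp_injective (Subtype.val_injective.comp e.injective)).subset
    fun n => singleton_subset_iff.2 (hxv n)⟩

lemma IsOpenCover.uNear_self {𝒰 : Set (Set M)} (h𝒰 : IsOpenCover 𝒰) (g : M ≃ₜ M) :
    UNear g g 𝒰 := fun x => by
  obtain ⟨U, hU, hxU⟩ := mem_sUnion.1 (h𝒰.2 ▸ mem_univ (g x))
  exact ⟨U, hU, hxU, hxU⟩

lemma IsOpenCover.setOf_uNear_mem_nhds {𝒰 : Set (Set M)} (h𝒰 : IsOpenCover 𝒰) (g : M ≃ₜ M) :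
    {f | UNear g f 𝒰} ∈ 𝓝 g :=
  IsOpen.mem_nhds (isOpen_generateFrom_of_mem ⟨g, 𝒰, h𝒰, rfl⟩) (h𝒰.uNear_self g)

lemma isOpenCover_subordinate_of_locallyFinite [T1Space M] {ι : Type*} {y : ι → M}
    (hy : LocallyFinite fun i => ({y i} : Set M)) {Q : ι → Set M} (hQ : ∀ i, IsOpen (Q i))
    (hyQ : ∀ i, y i ∈ Q i) :
    IsOpenCover {U | IsOpen U ∧ ∀ i, y i ∈ U → U ⊆ Q i} := by
  classical
  refine ⟨fun U hU => hU.1, eq_univ_of_forall fun z => ?_⟩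
  obtain ⟨t, ht, hfin⟩ := hy z
  -- near `z`, only the finitely many `y i` in `t` matter: keep `Q i` if `y i = z`, else avoid `y i`
  set V := t ∩ ⋂ i ∈ {i | ({y i} ∩ t).Nonempty}, if y i = z then Q i else {y i}ᶜ
  have hV : V ∈ 𝓝 z := by
    refine inter_mem ht ((biInter_mem hfin).2 fun i _ => ?_)
    split_ifs with h
    · exact (hQ i).mem_nhds (h ▸ hyQ i)
    · exact isOpen_compl_singleton.mem_nhds (Ne.symm h)
  refine ⟨interior V, ⟨isOpen_interior, fun i hi => ?_⟩, mem_interior_iff_mem_nhds.2 hV⟩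
  have hiV : y i ∈ V := interior_subset hi
  have hVi : V ⊆ if y i = z then Q i else {y i}ᶜ :=
    fun w hw => mem_iInter₂.1 hw.2 i ⟨y i, rfl, hiV.1⟩
  split_ifs at hVi
  · exact interior_subset.trans hVi
  · exact absurd rfl (hVi hiV)

lemma eventually_forall_apply_mem_of_locallyFinite [T1Space M] {ι : Type*} {x : ι → M}
    (hx : LocallyFinite fun i => ({x i} : Set M)) {g : M ≃ₜ M} {Q : ι → Set M}
    (hQ : ∀ i, IsOpen (Q i)) (hgQ : ∀ i, g (x i) ∈ Q i) :
    ∀ᶠ f in 𝓝 g, ∀ i, f (x i) ∈ Q i := by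
  have hgx : LocallyFinite fun i => ({g (x i)} : Set M) := by
    simpa only [Homeomorph.preimage_symm, image_singleton] using
      hx.preimage_continuous g.symm.continuous
  filter_upwards [(isOpenCover_subordinate_of_locallyFinite hgx hQ hgQ).setOf_uNear_mem_nhds g]
    with f hf i
  obtain ⟨U, ⟨-, hUQ⟩, hgU, hfU⟩ := hf (x i)
  exact hUQ i hgU hfU

lemma isLocallyConstant_tendsto_apply_zero [T1Space M] {x : ℕ → M}
    (hx : LocallyFinite fun n => ({x n} : Set M)) (φ : ℕ → C(M, ℝ)) :
    IsLocallyConstant fun g : M ≃ₜ M => Tendsto (fun n => φ n (g (x n))) atTop (𝓝 0) := by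
  refine (IsLocallyConstant.iff_eventually_eq _).2 fun g => ?_
  have hclose : ∀ᶠ f in 𝓝 g, ∀ n, φ n (f (x n)) ∈ Metric.ball (φ n (g (x n))) (1 / (n + 1)) :=
    eventually_forall_apply_mem_of_locallyFinite hx
      (fun n => Metric.isOpen_ball.preimage (φ n).continuous)
      (fun n => Metric.mem_ball_self (by positivity))
  filter_upwards [hclose] with f hf
  have hdiff : Tendsto (fun n => φ n (f (x n)) - φ n (g (x n))) atTop (𝓝 0) :=
    squeeze_zero_norm (fun n => by rw [← dist_eq_norm]; exact (hf n).le)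
      tendsto_one_div_add_atTop_nhds_zero_nat
  exact propext ⟨fun h => by simpa using h.sub hdiff, fun h => by simpa using h.add hdiff⟩

lemma exists_isClopen_separating_of_not_isCompact_support [ParacompactSpace M] [T2Space M]
    {h : M ≃ₜ M} (hh : ¬ IsCompact (closure {x | h x ≠ x})) :
    ∃ 𝒞 : Set (M ≃ₜ M), IsClopen 𝒞 ∧ Homeomorph.refl M ∈ 𝒞 ∧ h ∉ 𝒞 := by
  obtain ⟨x, hxh, hx⟩ := exists_seq_mem_locallyFinite_of_not_isCompact_closure hh
  have hsep : ∀ n, ∃ φ : C(M, ℝ), φ (x n) = 0 ∧ φ (h (x n)) = 1 := fun n => by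
    obtain ⟨φ, h0, h1, -⟩ := exists_continuous_zero_one_of_isClosed isClosed_singleton
      isClosed_singleton (disjoint_singleton.2 (Ne.symm (hxh n)))
    exact ⟨φ, h0 rfl, h1 rfl⟩
  choose φ hφx hφh using hsep
  refine ⟨_, (isLocallyConstant_tendsto_apply_zero hx φ).isClopen_fiber True, ?_, ?_⟩
  · simp [hφx]
  · simp [hφh]

end

/-- For a paracompact Hausdorff space `M`, the connected component of the identity in
`H(M)` with the Whitney topology consists of compactly supported homeomorphisms;
equivalently, every homeomorphism with non-compact support is separated from the identity
by a clopen subset of `H(M)`. -/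
theorem connectedComponent_subset_compactSupport (M : Type*) [TopologicalSpace M]
    [ParacompactSpace M] [T2Space M] :
    (∀ h : M ≃ₜ M,
      h ∈ @connectedComponent (M ≃ₜ M) (whitney M) (Homeomorph.refl M) →
      IsCompact (closure {x : M | h x ≠ x})) ∧
    (∀ h : M ≃ₜ M, ¬ IsCompact (closure {x : M | h x ≠ x}) →
      ∃ 𝒞 : Set (M ≃ₜ M), @IsClopen (M ≃ₜ M) (whitney M) 𝒞 ∧
        Homeomorph.refl M ∈ 𝒞 ∧ h ∉ 𝒞) := by
  refine ⟨fun h hh => ?_, fun _ => exists_isClopen_separating_of_not_isCompact_support⟩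
  by_contra hnc
  obtain ⟨𝒞, h𝒞, hid, h𝒞h⟩ := exists_isClopen_separating_of_not_isCompact_support hnc
  exact h𝒞h (h𝒞.connectedComponent_subset hid hh)
end

section
/- Let M be a paracompact Hausdorff space. Then every compact subset K of H_c(M) (with the Whitney topology) has compact total support: the set cl_M(⋃_{h∈K} supp(h)) is compact; consequently K ⊆ H(M, M∖K₀) for some compact K₀ ⊆ M. -/
open Filter Set TopologicalSpace

/-!
If the total support `D` had non-compact closure, paracompactness would give an infinite closed
discrete set `S ⊆ D`. Choosing for each `y ∈ S` some `h_y ∈ K` with `h_y y ≠ y`, there is a single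
open cover `𝒰` of `M` such that no member of `𝒰` containing `y ∈ S` contains `h_y y`. The
`𝒰`-neighbourhoods of the elements of `K` are Whitney open, so finitely many of them cover `K`;
but each of these finitely many centres moves only the finitely many points of `S` lying in its
compact support, and a point `y ∈ S` fixed by all of them gives a centre `g` with `g y = y`
that is `𝒰`-near `h_y`, which is impossible.
-/

section

variable {M : Type*} [TopologicalSpace M]

theorem isClosed_and_isDiscrete_of_finite_inter_nhds [T1Space M] {S : Set M}
    (hS : ∀ z, ∃ N ∈ nhds z, (N ∩ S).Finite) : IsClosed S ∧ IsDiscrete S := by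
  rw [← compl_mem_codiscrete_iff, codiscrete, codiscreteWithin_iff_locallyFiniteComplementWithin]
  simpa only [mem_univ, sdiff_compl, univ_inter, forall_const] using hS

theorem exists_infinite_isClosed_isDiscrete_subset_of_not_isCompact_closure
    [ParacompactSpace M] [T1Space M] {D : Set M} (hD : ¬IsCompact (closure D)) :
    ∃ S ⊆ D, S.Infinite ∧ IsClosed S ∧ IsDiscrete S := by
  rw [isCompact_iff_finite_subcover] at hD
  push Not at hD
  obtain ⟨ι, U, hUo, hDU, hnf⟩ := hD
  obtain ⟨v, hvo, hDv, hvlf, hvU⟩ := precise_refinement_set isClosed_closure U hUo hDU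
  set T := {i | (v i ∩ D).Nonempty}
  have hT : T.Infinite := by
    intro hT
    refine hnf hT.toFinset fun y hy => ?_
    obtain ⟨i, hyi⟩ := mem_iUnion.mp (hDv hy)
    have hi : i ∈ T := mem_closure_iff.mp hy (v i) (hvo i) hyi
    exact mem_biUnion (hT.mem_toFinset.mpr hi) (hvU i hyi)
  have : Nonempty M := let ⟨_, y, _⟩ := hT.nonempty; ⟨y⟩
  choose! p hp using fun i (hi : i ∈ T) => hi
  refine ⟨p '' T, image_subset_iff.mpr fun i hi => (hp i hi).2, fun hfin => hT ?_,
    isClosed_and_isDiscrete_of_finite_inter_nhds fun z => ?_⟩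
  · refine hfin.of_finite_fibers p fun y _ => (hvlf.point_finite y).subset ?_
    rintro i ⟨hi, rfl⟩
    exact (hp i hi).1
  · obtain ⟨N, hN, hfin⟩ := hvlf z
    refine ⟨N, hN, (hfin.image p).subset ?_⟩
    rintro _ ⟨hN, i, hi, rfl⟩
    exact ⟨i, ⟨p i, (hp i hi).1, hN⟩, rfl⟩

theorem exists_isOpenCover_forall_mem_imp_notMem [T1Space M] {S : Set M} (hS : IsClosed S)
    (hS' : IsDiscrete S) (φ : M → M) (hφ : ∀ y ∈ S, φ y ≠ y) :
    ∃ 𝒰 : Set (Set M), IsOpenCover 𝒰 ∧ ∀ y ∈ S, ∀ U ∈ 𝒰, y ∈ U → φ y ∉ U := by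
  set V : M → Set M := fun y => (S \ {y} ∪ {φ y})ᶜ
  have hyV : ∀ y ∈ S, y ∈ V y := by
    rintro y hy (⟨-, hne⟩ | heq)
    exacts [hne rfl, hφ y hy heq.symm]
  refine ⟨insert Sᶜ (V '' S), ⟨?_, ?_⟩, ?_⟩
  · rintro _ (rfl | ⟨y, -, rfl⟩)
    · exact hS.isOpen_compl
    · exact ((isClosed_of_subset_discrete_closed sdiff_subset hS' hS).union
        isClosed_singleton).isOpen_compl
  · refine eq_univ_of_forall fun z => ?_
    by_cases hz : z ∈ S
    · exact ⟨V z, mem_insert_of_mem _ (mem_image_of_mem V hz), hyV z hz⟩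
    · exact ⟨Sᶜ, mem_insert _ _, hz⟩
  · rintro y hy _ (rfl | ⟨y', -, rfl⟩) hyU
    · exact absurd hy hyU
    · obtain rfl : y = y' := by_contra fun hne => hyU (Or.inl ⟨hy, hne⟩)
      exact fun h => h (Or.inr rfl)

theorem isOpen_whitney_setOf_uNear (h : M ≃ₜ M) {𝒰 : Set (Set M)} (h𝒰 : IsOpenCover 𝒰) :
    @IsOpen (M ≃ₜ M) (whitney M) {g | UNear h g 𝒰} :=
  isOpen_generateFrom_of_mem ⟨h, 𝒰, h𝒰, rfl⟩

theorem uNear_refl {𝒰 : Set (Set M)} (h𝒰 : IsOpenCover 𝒰) (h : M ≃ₜ M) : UNear h h 𝒰 := by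
  intro x
  obtain ⟨U, hU, hxU⟩ := mem_sUnion.mp (h𝒰.2.symm ▸ mem_univ (h x))
  exact ⟨U, hU, hxU, hxU⟩

theorem finite_inter_biUnion_of_isCompact_whitney [T1Space M] {K : Set (M ≃ₜ M)}
    (hK : @IsCompact (M ≃ₜ M) (whitney M) K) {S : Set M} (hS : IsClosed S) (hS' : IsDiscrete S)
    (hfin : ∀ g ∈ K, (S ∩ {x | g x ≠ x}).Finite) :
    (S ∩ ⋃ h ∈ K, {x | h x ≠ x}).Finite := by
  let _ : TopologicalSpace (M ≃ₜ M) := whitney M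
  have hmoved : ∀ y ∈ S ∩ ⋃ h ∈ K, {x | h x ≠ x}, ∃ h ∈ K, h y ≠ y := fun y hy => by
    simpa using hy.2
  choose! φ hφK hφ using hmoved
  obtain ⟨𝒰, h𝒰, hsep⟩ := exists_isOpenCover_forall_mem_imp_notMem
    (isClosed_of_subset_discrete_closed inter_subset_left hS' hS) (hS'.mono inter_subset_left)
    (fun y => φ y y) hφ
  obtain ⟨t, ht⟩ := hK.elim_finite_subcover (fun g : K => {g' | UNear g.1 g' 𝒰})
    (fun g => isOpen_whitney_setOf_uNear g h𝒰) fun g hg => mem_iUnion.mpr ⟨⟨g, hg⟩, uNear_refl h𝒰 g⟩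
  refine (t.finite_toSet.biUnion fun g _ => hfin g g.2).subset fun y hy => ?_
  obtain ⟨g, hgt, hgφ⟩ := mem_iUnion₂.mp (ht (hφK y hy))
  refine mem_biUnion hgt ⟨hy.1, fun hgy => ?_⟩
  obtain ⟨U, hU, hgU, hφU⟩ := hgφ y
  exact hsep y hy U hU (hgy ▸ hgU) hφU

end

/-- For a paracompact Hausdorff space `M`, every compact set `K` of compactly supported
homeomorphisms (in the Whitney topology) has compact total support
`cl (⋃_{h∈K} supp h)`; consequently `K ⊆ H(M, M∖K₀)` for some compact `K₀ ⊆ M`. -/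
theorem compact_family_compact_total_support (M : Type*) [TopologicalSpace M]
    [ParacompactSpace M] [T2Space M] (K : Set (M ≃ₜ M))
    (hKc : @IsCompact (M ≃ₜ M) (whitney M) K)
    (hsupp : ∀ h ∈ K, IsCompact (closure {x : M | h x ≠ x})) :
    IsCompact (closure (⋃ h ∈ K, {x : M | h x ≠ x})) ∧
    ∃ K₀ : Set M, IsCompact K₀ ∧ ∀ h ∈ K, ∀ x ∉ K₀, h x = x := by
  set D := ⋃ h ∈ K, {x : M | h x ≠ x}
  have hD : IsCompact (closure D) := by
    by_contra hD
    obtain ⟨S, hSD, hSinf, hS, hS'⟩ :=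
      exists_infinite_isClosed_isDiscrete_subset_of_not_isCompact_closure hD
    refine hSinf ((finite_inter_biUnion_of_isCompact_whitney hKc hS hS' fun g hg => ?_).subset
      (subset_inter subset_rfl hSD))
    exact (((hsupp g hg).inter_left hS).finite (hS'.mono inter_subset_left)).subset
      (inter_subset_inter_right S subset_closure)
  refine ⟨hD, closure D, hD, fun h hh x hx => ?_⟩
  by_contra hne
  exact hx (subset_closure (mem_biUnion hh hne))
end

section
/- A regular space that is the union of countably many subspaces, each of which is second countable in the subspace topology, and in which every compact subset is contained in one of these subspaces, is an ℵ₀-space (possesses a countable k-network). -/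
/-!
The images in `X` of countable bases of the pieces `Xn n` form the k-network: a compact `K`
inside an open `U` lies in some `Xn n`, where it is still compact, so finitely many basic open
sets of `Xn n` contained in `U ∩ Xn n` cover it.
-/

open Set TopologicalSpace

section KNetwork

variable {X Y : Type*} [TopologicalSpace X] [TopologicalSpace Y]

def IsKNetwork (N : Set (Set X)) : Prop :=
  ∀ U : Set X, IsOpen U → ∀ K : Set X, IsCompact K → K ⊆ U →
    ∃ F ⊆ N, F.Finite ∧ K ⊆ ⋃₀ F ∧ ⋃₀ F ⊆ U

theorem TopologicalSpace.IsTopologicalBasis.isKNetwork {B : Set (Set X)}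
    (hB : IsTopologicalBasis B) : IsKNetwork B := by
  intro U hU K hK hKU
  have hcover : K ⊆ ⋃ V ∈ {V ∈ B | V ⊆ U}, id V := fun x hx => by
    obtain ⟨V, hVB, hxV, hVU⟩ := hB.exists_subset_of_mem_open (hKU hx) hU
    exact mem_biUnion ⟨hVB, hVU⟩ hxV
  obtain ⟨F, hFB, hF, hKF⟩ :=
    hK.elim_finite_subcover_image (fun V hV => hB.isOpen hV.1) hcover
  refine ⟨F, fun V hV => (hFB hV).1, hF, by rwa [sUnion_eq_biUnion], ?_⟩
  exact sUnion_subset fun V hV => (hFB hV).2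

theorem IsKNetwork.image_of_isInducing {N : Set (Set Y)} (hN : IsKNetwork N) {f : Y → X}
    (hf : Topology.IsInducing f) {U K : Set X} (hU : IsOpen U) (hK : IsCompact K)
    (hKf : K ⊆ range f) (hKU : K ⊆ U) :
    ∃ F ⊆ image f '' N, F.Finite ∧ K ⊆ ⋃₀ F ∧ ⋃₀ F ⊆ U := by
  obtain ⟨F, hFN, hF, hKF, hFU⟩ := hN (f ⁻¹' U) (hU.preimage hf.continuous) (f ⁻¹' K)
    (hf.isCompact_preimage' hK hKf) (preimage_mono hKU)
  refine ⟨image f '' F, image_mono hFN, hF.image _, ?_, ?_⟩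
  · rw [← image_sUnion, ← image_preimage_eq_of_subset hKf]
    exact image_mono hKF
  · rw [← image_sUnion]
    exact (image_mono hFU).trans (image_preimage_subset f U)

theorem isKNetwork_iUnion_image_val {ι : Type*} {s : ι → Set X} {N : ∀ i, Set (Set (s i))}
    (hN : ∀ i, IsKNetwork (N i)) (hcpt : ∀ K : Set X, IsCompact K → ∃ i, K ⊆ s i) :
    IsKNetwork (⋃ i, image Subtype.val '' N i) := by
  intro U hU K hK hKU
  obtain ⟨i, hKi⟩ := hcpt K hK
  obtain ⟨F, hFN, hF⟩ := (hN i).image_of_isInducing Topology.IsInducing.subtypeVal hU hK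
    (by rwa [Subtype.range_coe]) hKU
  exact ⟨F, hFN.trans (subset_iUnion_of_subset i subset_rfl), hF⟩

end KNetwork

theorem aleph0_space_of_countable_union_general (X : Type*) [TopologicalSpace X]
    (Xn : ℕ → Set X)
    (hsc : ∀ n, SecondCountableTopology (Xn n))
    (hcpt : ∀ K : Set X, IsCompact K → ∃ n, K ⊆ Xn n) :
    ∃ N : Set (Set X), N.Countable ∧
      ∀ U : Set X, IsOpen U → ∀ K : Set X, IsCompact K → K ⊆ U →
        ∃ F : Set (Set X), F ⊆ N ∧ F.Finite ∧ K ⊆ ⋃₀ F ∧ ⋃₀ F ⊆ U :=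
  ⟨⋃ n, image Subtype.val '' countableBasis (Xn n),
    countable_iUnion fun n => have := hsc n; (countable_countableBasis (Xn n)).image _,
    isKNetwork_iUnion_image_val (fun n => have := hsc n; (isBasis_countableBasis _).isKNetwork)
      hcpt⟩

/-- A regular space which is a countable union of second-countable subspaces such that
every compact subset is contained in one of them is an `ℵ₀`-space: it has a countable
`k`-network. -/
theorem aleph0_space_of_countable_union (X : Type*) [TopologicalSpace X]
    [RegularSpace X] (Xn : ℕ → Set X)
    (hcover : ⋃ n, Xn n = Set.univ)
    (hsc : ∀ n, SecondCountableTopology (Xn n))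
    (hcpt : ∀ K : Set X, IsCompact K → ∃ n, K ⊆ Xn n) :
    ∃ N : Set (Set X), N.Countable ∧
      ∀ U : Set X, IsOpen U → ∀ K : Set X, IsCompact K → K ⊆ U →
        ∃ F : Set (Set X), F ⊆ N ∧ F.Finite ∧ K ⊆ ⋃₀ F ∧ ⋃₀ F ⊆ U :=
  aleph0_space_of_countable_union_general X Xn hsc hcpt
end

section
/- Let G be a topological group equal to the union of an increasing sequence of subgroups (G_n)_{n∈ω}, such that the multiplication map p : ⊡_{n∈ω} G_n → G admits a local section at the identity. If each G_n is locally contractible, then G is locally contractible. -/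
open Filter Set TopologicalSpace

/-- A space is locally contractible if every point has arbitrarily small neighborhoods
that contract within any prescribed neighborhood. -/
def LocallyContractible (X : Type*) [TopologicalSpace X] : Prop :=
  ∀ x : X, ∀ U ∈ nhds x, ∃ V ∈ nhds x, V ⊆ U ∧
    ∃ φ : V × unitInterval → X, Continuous φ ∧
      (∀ (v : V) (t : unitInterval), φ (v, t) ∈ U) ∧
      (∀ v : V, φ (v, 0) = v) ∧ ∃ c : X, ∀ v : V, φ (v, 1) = c

/-!
The multiplication map `p` is continuous on the small box product: near a point `x₀`, the
factors of `x` beyond the support of `x₀` can be taken in a box neighbourhood of `1` whose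
`n`-th member is so small that their product is close to `1`.

The small box product of the locally contractible groups `Gₙ` is locally contractible at each
point `x₀`: contract each coordinate by a contraction of `Gₙ` that fixes `x₀ n`. For almost all
`n` that base point is `1`, and compactness of `[0, 1]` makes the `n`-th contraction uniformly
small near `1`; this is what continuity into the box topology requires.

Finally, a contraction `H` upstairs near `s 1` gives `p ∘ H ∘ (s × id)` downstairs, and
translations of `G` carry local contractibility from `1` to every point.
-/

open Topology unitInterval Pointwise

def LocallyContractibleAt (X : Type*) [TopologicalSpace X] (x : X) : Prop :=
  ∀ U ∈ 𝓝 x, ∃ V ∈ 𝓝 x, V ⊆ U ∧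
    ∃ φ : V × I → X, Continuous φ ∧ (∀ v t, φ (v, t) ∈ U) ∧
      (∀ v, φ (v, 0) = v) ∧ ∃ c : X, ∀ v, φ (v, 1) = c

theorem LocallyContractibleAt.of_localSection {X Y : Type*} [TopologicalSpace X]
    [TopologicalSpace Y] {f : Y → X} (hf : Continuous f) {x : X} {V : Set X} (hV : V ∈ 𝓝 x)
    {s : V → Y} (hs : Continuous s) (hfs : ∀ v, f (s v) = v)
    (h : LocallyContractibleAt Y (s ⟨x, mem_of_mem_nhds hV⟩)) : LocallyContractibleAt X x := by
  intro U hU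
  obtain ⟨W, hW, -, H, hH, hHU, hH0, c, hH1⟩ :=
    h (f ⁻¹' U) (hf.continuousAt.preimage_mem_nhds (by rwa [hfs]))
  have hsW : {v | ∃ hv : v ∈ V, s ⟨v, hv⟩ ∈ W} ∈ 𝓝 x := by
    have := mem_nhds_subtype_iff_nhdsWithin.1 (hs.continuousAt.preimage_mem_nhds hW)
    rwa [nhdsWithin_eq_nhds.2 hV, Subtype.coe_image] at this
  let V' := {v | ∃ hv : v ∈ V, s ⟨v, hv⟩ ∈ W} ∩ U
  let lift : V' → W := fun v => ⟨s ⟨v, v.2.1.1⟩, v.2.1.2⟩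
  have hlift : Continuous lift := (hs.comp (continuous_subtype_val.subtype_mk _)).subtype_mk _
  refine ⟨V', inter_mem hsW hU, inter_subset_right, fun z => f (H (lift z.1, z.2)),
    hf.comp (hH.comp ((hlift.comp continuous_fst).prodMk continuous_snd)),
    fun v t => hHU _ _, fun v => ?_, f c, fun v => by simp only [hH1]⟩
  simp only [hH0, lift, hfs]

structure PointedContraction {X : Type*} [TopologicalSpace X] (D W : Set X) (b : X) where
  toFun : D × I → X
  continuous_toFun : Continuous toFun
  mapsTo : ∀ (d : D) t, toFun (d, t) ∈ W
  apply_zero : ∀ d, toFun (d, 0) = d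
  apply_one : ∀ d, toFun (d, 1) = b
  apply_of_eq : ∀ (d : D) t, (d : X) = b → toFun (d, t) = b

namespace PointedContraction

variable {X : Type*} [TopologicalSpace X] {D W : Set X} {b : X}

theorem eventually_forall_mem (η : PointedContraction D W b) (hD : D ∈ 𝓝 b) {Q : Set X}
    (hQ : Q ∈ 𝓝 b) : ∀ᶠ y in 𝓝 b, ∀ d : D, (d : X) = y → ∀ t, η.toFun (d, t) ∈ Q := by
  let b' : D := ⟨b, mem_of_mem_nhds hD⟩
  have : ∀ᶠ d in 𝓝 b', ∀ t ∈ univ, η.toFun (d, t) ∈ Q :=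
    isCompact_univ.eventually_forall_of_forall_eventually fun t _ =>
      η.continuous_toFun.continuousAt.preimage_mem_nhds (by rwa [η.apply_of_eq b' t rfl])
  obtain ⟨R, hR, hRQ⟩ := (mem_nhds_induced _ _ _).1 this
  filter_upwards [hR] with y hy d hd t
  exact hRQ (by rwa [mem_preimage, hd]) t (mem_univ t)

end PointedContraction

/-- Normalising a contraction `φ` to `φ (d, t) * φ (b, t)⁻¹ * b` pins the base point. -/
theorem LocallyContractibleAt.exists_pointedContraction {H : Type*} [Group H]
    [TopologicalSpace H] [IsTopologicalGroup H] {b : H} (h : LocallyContractibleAt H b)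
    {W : Set H} (hW : W ∈ 𝓝 b) : ∃ D ∈ 𝓝 b, Nonempty (PointedContraction D W b) := by
  have hcont : Tendsto (fun q : H × H => q.1 * q.2⁻¹ * b) (𝓝 (b, b)) (𝓝 b) :=
    (by fun_prop : Continuous fun q : H × H => q.1 * q.2⁻¹ * b).tendsto' _ _ (by simp)
  rw [nhds_prod_eq] at hcont
  obtain ⟨W', hW', hW'W⟩ := mem_prod_self_iff.1 (hcont hW)
  obtain ⟨D, hD, -, φ, hφ, hφW, hφ0, c, hφ1⟩ := h W' hW'
  let b' : D := ⟨b, mem_of_mem_nhds hD⟩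
  refine ⟨D, hD, ⟨fun z => φ z * (φ (b', z.2))⁻¹ * b, ?_,
    fun d t => hW'W (mk_mem_prod (hφW d t) (hφW b' t)), fun d => by simp [hφ0, b'],
    fun d => by simp [hφ1], fun d t hd => ?_⟩⟩
  · exact (hφ.mul (hφ.comp (continuous_const.prodMk continuous_snd)).inv).mul continuous_const
  · obtain rfl : d = b' := Subtype.ext hd
    simp

theorem List.prod_map_range_mem_of_mul_subset {M : Type*} [Monoid M] {C : ℕ → Set M}
    (hC1 : ∀ n, (1 : M) ∈ C n) (hC : ∀ n, C (n + 1) * C (n + 1) ⊆ C n) {c : ℕ → M}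
    (hc : ∀ i, c i ∈ C (i + 1)) (m : ℕ) : ((List.range m).map c).prod ∈ C 0 := by
  suffices ∀ k, ∀ a ∈ C k, ((List.range k).map c).prod * a ∈ C 0 by
    simpa using this m 1 (hC1 m)
  intro k
  induction k with
  | zero => simp
  | succ k ih =>
    intro a ha
    rw [List.range_succ, List.map_append, List.prod_append]
    simpa [mul_assoc] using ih _ (hC k (mul_mem_mul (hc k) ha))

theorem exists_seq_nhds_one_mul_subset {M : Type*} [TopologicalSpace M] [MulOneClass M]
    [ContinuousMul M] {S : Set M} (hS : S ∈ 𝓝 1) :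
    ∃ C : ℕ → Set M, C 0 = S ∧ (∀ n, C n ∈ 𝓝 1) ∧ ∀ n, C (n + 1) * C (n + 1) ⊆ C n := by
  choose half hhalf using fun T : {T : Set M // T ∈ 𝓝 1} => exists_nhds_one_split T.2
  let next : {T : Set M // T ∈ 𝓝 1} → {T : Set M // T ∈ 𝓝 1} := fun T => ⟨half T, (hhalf T).1⟩
  refine ⟨fun n => (next^[n] ⟨S, hS⟩).1, rfl, fun n => (next^[n] ⟨S, hS⟩).2, fun n => ?_⟩
  simp only [Function.iterate_succ_apply']
  exact mul_subset_iff.2 (hhalf _).2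

-- A type synonym, so that the box topology can be an instance without clashing with `Pi`.
def BoxProduct (X : ℕ → Type*) : Type _ := ∀ n, X n

instance BoxProduct.instTopologicalSpace (X : ℕ → Type*) [∀ n, TopologicalSpace (X n)] :
    TopologicalSpace (BoxProduct X) :=
  boxTop X

namespace BoxProduct

variable {X : ℕ → Type*} [∀ n, TopologicalSpace (X n)]

theorem isTopologicalBasis :
    IsTopologicalBasis {S : Set (BoxProduct X) |
      ∃ U : ∀ n, Set (X n), (∀ n, IsOpen (U n)) ∧ S = univ.pi U} := by
  refine .mk ?_ ?_ rfl
  · rintro _ ⟨U, hU, rfl⟩ _ ⟨U', hU', rfl⟩ x hx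
    exact ⟨_, ⟨fun n => U n ∩ U' n, fun n => (hU n).inter (hU' n), rfl⟩,
      by rwa [pi_inter_distrib], (pi_inter_distrib).subset⟩
  · exact sUnion_eq_univ_iff.2 fun x =>
      ⟨univ, ⟨fun _ => univ, fun _ => isOpen_univ, (pi_univ _).symm⟩, mem_univ x⟩

theorem hasBasis_nhds (x : BoxProduct X) :
    (𝓝 x).HasBasis (fun Q : ∀ n, Set (X n) => ∀ n, Q n ∈ 𝓝 (x n)) (univ.pi ·) := by
  refine isTopologicalBasis.nhds_hasBasis.to_hasBasis ?_ ?_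
  · rintro _ ⟨⟨U, hU, rfl⟩, hx⟩
    exact ⟨U, fun n => (hU n).mem_nhds (hx n (mem_univ n)), subset_rfl⟩
  · intro Q hQ
    exact ⟨_, ⟨⟨fun n => interior (Q n), fun n => isOpen_interior, rfl⟩,
      fun n _ => mem_interior_iff_mem_nhds.2 (hQ n)⟩,
      pi_mono fun n _ => interior_subset⟩

end BoxProduct

/-- The small box product `⊡ₙ Gₙ`, realised inside the box product of copies of `G`. -/
abbrev SmallBoxProduct {G : Type*} [Group G] (Gn : ℕ → Subgroup G) : Type _ :=
  {x : BoxProduct fun _ : ℕ => G // (∀ n, x n ∈ Gn n) ∧ ∀ᶠ n in atTop, x n = 1}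

namespace SmallBoxProduct

variable {G : Type*} [Group G] [TopologicalSpace G] {Gn : ℕ → Subgroup G}

theorem hasBasis_nhds (x : SmallBoxProduct Gn) :
    (𝓝 x).HasBasis (fun Q : ℕ → Set G => ∀ n, Q n ∈ 𝓝 (x.1 n))
      (fun Q => {y | ∀ n, y.1 n ∈ Q n}) := by
  rw [nhds_induced]
  exact ((BoxProduct.hasBasis_nhds x.1).comap Subtype.val).to_hasBasis
    (fun Q hQ => ⟨Q, hQ, fun _ hy n _ => hy n⟩) fun Q hQ => ⟨Q, hQ, fun _ hy n => hy n (mem_univ n)⟩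

theorem eventually_forall_of_forall_eventually (x : SmallBoxProduct Gn) {P : ℕ → G → Prop}
    (hP : ∀ n, ∀ᶠ g in 𝓝 (x.1 n), P n g) : ∀ᶠ y in 𝓝 x, ∀ n, P n (y.1 n) :=
  (hasBasis_nhds x).mem_of_mem hP

theorem continuous_apply (n : ℕ) : Continuous fun x : SmallBoxProduct Gn => x.1 n :=
  continuous_iff_continuousAt.2 fun x W hW =>
    (eventually_forall_of_forall_eventually x (P := fun m g => m = n → g ∈ W) fun _ =>
      eventually_imp_distrib_left.2 fun hm => hm ▸ hW).mono fun _ hy => hy n rfl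

def coord (n : ℕ) (x : SmallBoxProduct Gn) : Gn n := ⟨x.1 n, x.2.1 n⟩

theorem continuous_coord (n : ℕ) : Continuous (coord (Gn := Gn) n) :=
  (continuous_apply n).subtype_mk _

section Contraction

variable {x₀ : SmallBoxProduct Gn} {D W : ∀ n, Set (Gn n)}

theorem eventually_forall_coord_mem (hD : ∀ n, D n ∈ 𝓝 (coord n x₀)) :
    ∀ᶠ x in 𝓝 x₀, ∀ n, coord n x ∈ D n := by
  refine (eventually_forall_of_forall_eventually x₀
    (P := fun n g => ∀ y : Gn n, (y : G) = g → y ∈ D n) fun n => eventually_comap.1 ?_).mono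
    fun x hx n => hx n _ rfl
  have := hD n
  rwa [nhds_induced] at this

/-- The result lies in the small box product because for large `n` both `x n` and `x₀ n` are `1`
and the `n`-th contraction fixes its base point. -/
def boxContraction (η : ∀ n, PointedContraction (D n) (W n) (coord n x₀)) :
    {x : SmallBoxProduct Gn | ∀ n, coord n x ∈ D n} × I → SmallBoxProduct Gn := fun z =>
  ⟨fun n => (η n).toFun (⟨coord n z.1, z.1.2 n⟩, z.2), fun n => SetLike.coe_mem _,
    (z.1.1.2.2.and x₀.2.2).mono fun n hn => by
      show ((η n).toFun (⟨coord n z.1, z.1.2 n⟩, z.2) : G) = 1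
      rw [(η n).apply_of_eq _ _ (Subtype.ext (hn.1.trans hn.2.symm))]
      exact hn.2⟩

theorem continuous_boxContraction (η : ∀ n, PointedContraction (D n) (W n) (coord n x₀))
    (hD : ∀ n, D n ∈ 𝓝 (coord n x₀)) : Continuous (boxContraction η) := by
  refine continuous_iff_continuousAt.2 fun z₁ =>
    (hasBasis_nhds _).tendsto_right_iff.2 fun Q hQ => ?_
  obtain ⟨K, hK⟩ := eventually_atTop.1 (z₁.1.1.2.2.and x₀.2.2)
  have hhead : ∀ᶠ z in 𝓝 z₁, ∀ n ∈ Finset.range K, (boxContraction η z).1 n ∈ Q n :=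
    (eventually_all_finset _).2 fun n _ => (continuous_subtype_val.comp <|
      (η n).continuous_toFun.comp <| (((continuous_coord n).comp <|
        continuous_subtype_val.comp continuous_fst).subtype_mk _).prodMk continuous_snd)
      |>.continuousAt.preimage_mem_nhds (hQ n)
  -- beyond `K` the `n`-th coordinate of `z₁` is the base point, so the tube lemma applies
  have htail : ∀ᶠ x in 𝓝 z₁.1.1, ∀ n, K ≤ n → ∀ d : D n, ((d : Gn n) : G) = x.1 n →
      ∀ t, ((η n).toFun (d, t) : G) ∈ Q n := by
    refine eventually_forall_of_forall_eventually z₁.1.1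
      (P := fun n g => K ≤ n → ∀ d : D n, ((d : Gn n) : G) = g →
        ∀ t, ((η n).toFun (d, t) : G) ∈ Q n)
      fun n => eventually_imp_distrib_left.2 fun hn => ?_
    have hbase : z₁.1.1.1 n = x₀.1 n := (hK n hn).1.trans (hK n hn).2.symm
    have hval : (boxContraction η z₁).1 n = x₀.1 n :=
      congrArg Subtype.val ((η n).apply_of_eq ⟨_, z₁.1.2 n⟩ z₁.2 (Subtype.ext hbase))
    have hQn : Subtype.val ⁻¹' Q n ∈ 𝓝 (coord n x₀) := by
      have := hQ n
      rw [hval] at this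
      rw [nhds_induced]
      exact preimage_mem_comap this
    have := (η n).eventually_forall_mem (hD n) hQn
    rw [nhds_induced] at this
    rw [hbase]
    exact (eventually_comap.1 this).mono fun g hg d hd t => hg d hd d rfl t
  filter_upwards [hhead, ((continuous_subtype_val.comp continuous_fst).tendsto z₁).eventually htail]
    with z hzhead hztail n
  rcases lt_or_ge n K with hn | hn
  · exact hzhead n (Finset.mem_range.2 hn)
  · exact hztail n hn _ rfl z.2

end Contraction

variable [IsTopologicalGroup G]

theorem continuous_of_eq_prod {f : SmallBoxProduct Gn → G}
    (hf : ∀ x N, (∀ n, N ≤ n → x.1 n = 1) → f x = ((List.range N).map fun n => x.1 n).prod) :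
    Continuous f := by
  refine continuous_iff_continuousAt.2 fun x₀ => ?_
  obtain ⟨K, hK⟩ := eventually_atTop.1 x₀.2.2
  let A : SmallBoxProduct Gn → G := fun x => ((List.range K).map fun n => x.1 n).prod
  have hA : Continuous A := continuous_list_prod _ fun n _ => continuous_apply n
  -- beyond the support of `x₀`, the factors of a nearby `x` have a product close to `1`
  have htail : Tendsto (fun x => (A x)⁻¹ * f x) (𝓝 x₀) (𝓝 1) := by
    refine tendsto_def.2 fun Q hQ => ?_
    obtain ⟨C, rfl, hC, hCC⟩ := exists_seq_nhds_one_mul_subset hQ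
    have hbox : ∀ᶠ x in 𝓝 x₀, ∀ n, K ≤ n → x.1 n ∈ C (n - K + 1) :=
      eventually_forall_of_forall_eventually x₀ fun n => eventually_imp_distrib_left.2 fun hn => by
        rw [hK n hn]; exact hC _
    filter_upwards [hbox] with x hx
    obtain ⟨N, hN⟩ := eventually_atTop.1 x.2.2
    obtain ⟨m, hm⟩ : ∃ m, max N K = K + m := ⟨max N K - K, by omega⟩
    have hsplit : (A x)⁻¹ * f x = ((List.range m).map fun i => x.1 (K + i)).prod := by
      rw [hf x (max N K) fun n hn => hN n (le_of_max_le_left hn), hm, List.range_add,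
        List.map_append, List.prod_append, List.map_map, inv_mul_cancel_left]
      rfl
    show (A x)⁻¹ * f x ∈ C 0
    rw [hsplit]
    refine List.prod_map_range_mem_of_mul_subset (fun n => mem_of_mem_nhds (hC n)) hCC
      (fun i => ?_) m
    simpa using hx (K + i) (Nat.le_add_right K i)
  simpa [ContinuousAt, A, ← hf x₀ K hK] using (hA.tendsto x₀).mul htail

theorem locallyContractibleAt (hlc : ∀ n, LocallyContractible (Gn n))
    (x₀ : SmallBoxProduct Gn) : LocallyContractibleAt (SmallBoxProduct Gn) x₀ := by
  intro U hU
  obtain ⟨W, hW, hWU⟩ := (hasBasis_nhds x₀).mem_iff.1 hU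
  choose D hD η using fun n => LocallyContractibleAt.exists_pointedContraction (hlc n (coord n x₀))
    (continuous_subtype_val.continuousAt.preimage_mem_nhds (hW n))
  let η' n := (η n).some
  refine ⟨_, eventually_forall_coord_mem hD, fun x hx => hWU fun n => ?_, boxContraction η',
    continuous_boxContraction η' hD, fun z t => hWU fun n => (η' n).mapsTo _ t,
    fun z => Subtype.ext <| funext fun n => congrArg Subtype.val ((η' n).apply_zero _), x₀,
    fun z => Subtype.ext <| funext fun n => congrArg Subtype.val ((η' n).apply_one _)⟩
  have := (η' n).mapsTo ⟨coord n x, hx n⟩ 0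
  rwa [(η' n).apply_zero] at this

end SmallBoxProduct

theorem locallyContractible_of_smallBox_section_general (G : Type*) [Group G]
    [TopologicalSpace G] [IsTopologicalGroup G] (Gn : ℕ → Subgroup G)
    (p : {x : ∀ _ : ℕ, G // (∀ n, x n ∈ Gn n) ∧ ∀ᶠ n in Filter.atTop, x n = 1} → G)
    (hp : ∀ x, ∀ N : ℕ, (∀ n, N ≤ n → x.val n = 1) →
      p x = ((List.range N).map x.val).prod)
    (hsec : ∃ V ∈ nhds (1 : G),
      ∃ s : V → {x : ∀ _ : ℕ, G // (∀ n, x n ∈ Gn n) ∧ ∀ᶠ n in Filter.atTop, x n = 1},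
        @Continuous _ _ inferInstance ((boxTop fun _ : ℕ => G).induced Subtype.val) s ∧
        ∀ v : V, p (s v) = v)
    (hlc : ∀ n, LocallyContractible (Gn n)) :
    LocallyContractible G := by
  obtain ⟨V, hV, s, hs, hps⟩ := hsec
  -- the domain of `p` has to be read with the box topology, not the product topology
  have hp_cont : Continuous (X := SmallBoxProduct Gn) p :=
    SmallBoxProduct.continuous_of_eq_prod hp
  have h1 : LocallyContractibleAt G 1 :=
    .of_localSection (Y := SmallBoxProduct Gn) hp_cont hV hs hps
      (SmallBoxProduct.locallyContractibleAt hlc _)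
  intro g
  exact LocallyContractibleAt.of_localSection (continuous_const_mul g) univ_mem
    (s := fun v => g⁻¹ * v.1) (by fun_prop) (fun v => mul_inv_cancel_left g v) (by simpa using h1)

/-- Let `G` be a topological group which is the union of an increasing sequence of
subgroups `(Gₙ)` such that the multiplication map `p : ⊡ₙ Gₙ → G` admits a local section
at the identity.  If each `Gₙ` is locally contractible, then `G` is locally
contractible. -/
theorem locallyContractible_of_smallBox_section (G : Type*) [Group G]
    [TopologicalSpace G] [IsTopologicalGroup G] (Gn : ℕ → Subgroup G)
    (hmono : Monotone Gn) (hunion : ∀ g : G, ∃ n, g ∈ Gn n)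
    (p : {x : ∀ _ : ℕ, G // (∀ n, x n ∈ Gn n) ∧ ∀ᶠ n in Filter.atTop, x n = 1} → G)
    (hp : ∀ x, ∀ N : ℕ, (∀ n, N ≤ n → x.val n = 1) →
      p x = ((List.range N).map x.val).prod)
    (hsec : ∃ V ∈ nhds (1 : G),
      ∃ s : V → {x : ∀ _ : ℕ, G // (∀ n, x n ∈ Gn n) ∧ ∀ᶠ n in Filter.atTop, x n = 1},
        @Continuous _ _ inferInstance ((boxTop fun _ : ℕ => G).induced Subtype.val) s ∧
        ∀ v : V, p (s v) = v)
    (hlc : ∀ n, LocallyContractible (Gn n)) :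
    LocallyContractible G :=
  locallyContractible_of_smallBox_section_general G Gn p hp hsec hlc
end

section
/- Let G be a topological group acting continuously and effectively on M, let K ⊆ L ⊆ M, and suppose the set E^G_K(L,M) = {g|_L : g ∈ G_K} carries an admissible topology τ (one for which the G_K-action by left composition is continuous). If the restriction map r : G_K → E^G_K(L,M)^τ admits a local section at the inclusion i_L, then r admits a local section at every point of E^G_K(L,M)^τ, and r is a principal G_L∩G_K-bundle; in particular τ coincides with the quotient topology induced by r. -/
open Filter Set TopologicalSpace

/-- The set `E^G_K(L,M)` of restrictions to `L` of elements of `G` fixing `K`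
pointwise. -/
abbrev EmbSp (G M : Type*) [Group G] [TopologicalSpace M] [MulAction G M]
    (K L : Set M) : Type _ :=
  {f : L → M // ∃ g : G, (∀ x ∈ K, g • x = x) ∧ f = fun x : L => g • (x : M)}

/-- The restriction map `r : G_K → E^G_K(L,M)`. -/
def restK (G M : Type*) [Group G] [TopologicalSpace M] [MulAction G M] (K L : Set M)
    (g : {g : G // ∀ x ∈ K, g • x = x}) : EmbSp G M K L :=
  ⟨fun x : L => g.val • (x : M), g.val, g.property, rfl⟩

/-- The inclusion `i_L : L ⊆ M` as an element of `E^G_K(L,M)`. -/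
def inclE (G M : Type*) [Group G] [TopologicalSpace M] [MulAction G M] (K L : Set M) :
    EmbSp G M K L :=
  ⟨fun x : L => (x : M), 1, fun x _ => one_smul G x, by
    funext x; rw [one_smul]⟩

/-- The action of `G_K` on `E^G_K(L,M)` by left composition. -/
def actE {G M : Type*} [Group G] [TopologicalSpace M] [MulAction G M] {K L : Set M}
    (g : {g : G // ∀ x ∈ K, g • x = x}) (f : EmbSp G M K L) : EmbSp G M K L :=
  ⟨fun x => g.val • f.val x, by
    obtain ⟨g0, hg0, hf⟩ := f.property
    refine ⟨g.val * g0, fun x hx => ?_, ?_⟩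
    · rw [mul_smul, hg0 x hx, g.property x hx]
    · funext x; simp only [hf, mul_smul]⟩

/-!
Since `G_K` acts transitively on `E^G_K(L,M)` by homeomorphisms and `r` is equivariant, a local
section `s` at `i_L` is transported to `f = r g₀` as `v ↦ g₀ * s (g₀⁻¹ · v)`. Local sections
everywhere make `r` a quotient map, and a section `s` over `V` trivialises `r` over `V` by
`(v, h) ↦ s v * h`, because two elements of `G_K` have the same restriction to `L` exactly when
they differ by an element of `G_L`.
-/

open Topology

section LocalSection

variable {X Y : Type*} [TopologicalSpace X] [TopologicalSpace Y]

def HasLocalSectionAt (r : X → Y) (y : Y) : Prop :=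
  ∃ V ∈ 𝓝 y, ∃ s : V → X, Continuous s ∧ ∀ v : V, r (s v) = v

theorem HasLocalSectionAt.of_semiconj {r : X → Y} {φ : Y → Y} {ψ : X → X} {y : Y}
    (h : HasLocalSectionAt r (φ y)) (hφ : Continuous φ) (hψ : Continuous ψ)
    (hr : ∀ x y, r x = φ y → r (ψ x) = y) : HasLocalSectionAt r y := by
  obtain ⟨V, hV, s, hs, hrs⟩ := h
  exact ⟨φ ⁻¹' V, hφ.continuousAt.preimage_mem_nhds hV, fun v => ψ (s ⟨φ v, v.2⟩),
    hψ.comp (hs.comp ((hφ.comp continuous_subtype_val).subtype_mk _)),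
    fun v => hr _ _ (hrs _)⟩

theorem eq_coinduced_of_forall_hasLocalSectionAt {r : X → Y} (hr : Continuous r)
    (h : ∀ y, HasLocalSectionAt r y) : ‹TopologicalSpace Y› = .coinduced r ‹_› := by
  refine le_antisymm (fun U hU => isOpen_iff_mem_nhds.2 fun y hy => ?_) hr.coinduced_le
  obtain ⟨V, hV, s, hs, hrs⟩ := h y
  have hUV : IsOpen (Subtype.val ⁻¹' U : Set V) := by
    simpa only [preimage_preimage, hrs] using hU.preimage hs
  have hy' : Subtype.val ⁻¹' U ∈ 𝓝 (⟨y, mem_of_mem_nhds hV⟩ : V) := hUV.mem_nhds hy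
  rw [mem_nhds_subtype_iff_nhdsWithin, nhdsWithin_eq_nhds.2 hV] at hy'
  exact mem_of_superset hy' (image_preimage_subset _ _)

end LocalSection

/-- The pointwise stabiliser `G_S` of `S`. -/
abbrev Fixing (G : Type*) {M : Type*} [Group G] [MulAction G M] (S : Set M) : Type _ :=
  {g : G // ∀ x ∈ S, g • x = x}

section Fixing

variable {G M : Type*} [Group G] [MulAction G M] {S : Set M}

theorem fixes_mul {g h : G} (hg : ∀ x ∈ S, g • x = x) (hh : ∀ x ∈ S, h • x = x) :
    ∀ x ∈ S, (g * h) • x = x := fun x hx => by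
  rw [mul_smul, hh x hx, hg x hx]

theorem fixes_inv {g : G} (hg : ∀ x ∈ S, g • x = x) : ∀ x ∈ S, g⁻¹ • x = x :=
  fun x hx => inv_smul_eq_iff.2 (hg x hx).symm

end Fixing

section Restriction

variable {G M : Type*} [Group G] [TopologicalSpace M] [MulAction G M] {K L : Set M}

theorem restK_surjective : Function.Surjective (restK G M K L) := by
  rintro ⟨f, g, hg, rfl⟩
  exact ⟨⟨g, hg⟩, rfl⟩

theorem restK_eq_iff {g g' : Fixing G K} :
    restK G M K L g = restK G M K L g' ↔ ∀ x ∈ L, (g.val⁻¹ * g'.val) • x = x := by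
  simp only [restK, Subtype.mk.injEq, funext_iff, Subtype.forall, mul_smul, inv_smul_eq_iff]
  exact forall₂_congr fun _ _ => eq_comm

theorem restK_mul_of_fixes (g : Fixing G K) {h : G} (hh : ∀ x ∈ L, h • x = x)
    (hgh : ∀ x ∈ K, (g.val * h) • x = x) : restK G M K L ⟨g.val * h, hgh⟩ = restK G M K L g :=
  Eq.symm <| restK_eq_iff.2 fun x hx => by rw [inv_mul_cancel_left, hh x hx]

def sectionTrivialization (hKL : K ⊆ L) {V : Set (EmbSp G M K L)} (s : V → Fixing G K)
    (hs : ∀ v : V, restK G M K L (s v) = v) :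
    (V × Fixing G L) ≃ {g : Fixing G K // restK G M K L g ∈ V} where
  toFun q := ⟨⟨(s q.1).val * q.2.val, fixes_mul (s q.1).2 fun x hx => q.2.2 x (hKL hx)⟩, by
    rw [restK_mul_of_fixes _ q.2.2, hs]; exact q.1.2⟩
  invFun g := (⟨_, g.2⟩, ⟨(s ⟨_, g.2⟩).val⁻¹ * g.val.val, restK_eq_iff.1 (hs _)⟩)
  left_inv := by
    rintro ⟨v, h⟩
    have hv : restK G M K L ⟨(s v).val * h.val, fixes_mul (s v).2 fun x hx => h.2 x (hKL hx)⟩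
        = v := (restK_mul_of_fixes _ h.2 _).trans (hs v)
    refine Prod.ext (Subtype.ext hv) (Subtype.ext ?_)
    change (s ⟨_, _⟩).val⁻¹ * ((s v).val * h.val) = h.val
    rw [congrArg s (Subtype.ext hv), inv_mul_cancel_left]
  right_inv g := by
    ext1; ext1; exact mul_inv_cancel_left _ _

theorem restK_sectionTrivialization (hKL : K ⊆ L) {V : Set (EmbSp G M K L)} (s : V → Fixing G K)
    (hs : ∀ v : V, restK G M K L (s v) = v) (q : V × Fixing G L) :
    restK G M K L (sectionTrivialization hKL s hs q).val = q.1 :=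
  (restK_mul_of_fixes _ q.2.2 _).trans (hs q.1)

variable [TopologicalSpace G] [TopologicalSpace (EmbSp G M K L)]

theorem continuous_restK
    (hadm : Continuous fun q : Fixing G K × EmbSp G M K L => actE q.1 q.2) :
    Continuous (restK G M K L) :=
  hadm.comp (continuous_id.prodMk (continuous_const (y := inclE G M K L)))

variable [IsTopologicalGroup G]

theorem hasLocalSectionAt_restK
    (hadm : Continuous fun q : Fixing G K × EmbSp G M K L => actE q.1 q.2)
    (hsec : HasLocalSectionAt (restK G M K L) (inclE G M K L)) (f : EmbSp G M K L) :
    HasLocalSectionAt (restK G M K L) f := by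
  obtain ⟨g, rfl⟩ := restK_surjective f
  let g' : Fixing G K := ⟨g.val⁻¹, fixes_inv g.2⟩
  refine HasLocalSectionAt.of_semiconj (φ := actE g')
    (ψ := fun x => ⟨g.val * x.val, fixes_mul g.2 x.2⟩)
    ?_ (hadm.comp (continuous_const.prodMk continuous_id))
    ((continuous_const.mul continuous_subtype_val).subtype_mk _) fun x e hx => ?_
  · convert hsec using 1
    exact Subtype.ext (funext fun x => inv_smul_smul g.val (x : M))
  · refine Subtype.ext (funext fun y => ?_)
    have hxy := congrFun (congrArg Subtype.val hx) y
    exact (mul_smul _ _ _).trans ((smul_eq_iff_eq_inv_smul _).2 hxy)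

theorem isHomeomorph_sectionTrivialization
    (hadm : Continuous fun q : Fixing G K × EmbSp G M K L => actE q.1 q.2) (hKL : K ⊆ L)
    {V : Set (EmbSp G M K L)} {s : V → Fixing G K} (hsc : Continuous s)
    (hs : ∀ v : V, restK G M K L (s v) = v) :
    IsHomeomorph (sectionTrivialization hKL s hs) := by
  have hrV : Continuous fun g : {g : Fixing G K // restK G M K L g ∈ V} => (⟨_, g.2⟩ : V) :=
    ((continuous_restK hadm).comp continuous_subtype_val).subtype_mk _
  refine (Homeomorph.mk (sectionTrivialization hKL s hs) ?_ ?_).isHomeomorph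
  · exact (((hsc.comp continuous_fst).subtype_val.mul
      continuous_snd.subtype_val).subtype_mk _).subtype_mk _
  · exact hrV.prodMk ((((hsc.comp hrV).subtype_val.inv).mul
      continuous_subtype_val.subtype_val).subtype_mk _)

end Restriction

/-- Let `G` act continuously and effectively on `M`, `K ⊆ L ⊆ M`, and let
`E^G_K(L,M)` carry an admissible topology `τ` (one making the `G_K`-action continuous).
If the restriction map `r : G_K → E^G_K(L,M)` admits a local section at the inclusion
`i_L`, then `r` admits a local section at every point, `τ` is the quotient topology
induced by `r`, and `r` is a principal `G_L ∩ G_K`-bundle (locally trivial with fiber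
`G_L`, compatibly with right translation). -/
theorem restriction_principal_bundle (G M : Type*) [Group G] [TopologicalSpace G]
    [IsTopologicalGroup G] [TopologicalSpace M] [MulAction G M]
    (K L : Set M) (hKL : K ⊆ L)
    (τ : TopologicalSpace (EmbSp G M K L))
    (hadm : @Continuous ({g : G // ∀ x ∈ K, g • x = x} × EmbSp G M K L)
      (EmbSp G M K L) (@instTopologicalSpaceProd _ _ inferInstance τ) τ
      (fun q => actE q.1 q.2))
    (hsec : ∃ V ∈ @nhds _ τ (inclE G M K L),
      ∃ s : V → {g : G // ∀ x ∈ K, g • x = x},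
        @Continuous _ _ (τ.induced Subtype.val) inferInstance s ∧
        ∀ v : V, restK G M K L (s v) = (v : EmbSp G M K L)) :
    (∀ f : EmbSp G M K L, ∃ V ∈ @nhds _ τ f,
      ∃ s : V → {g : G // ∀ x ∈ K, g • x = x},
        @Continuous _ _ (τ.induced Subtype.val) inferInstance s ∧
        ∀ v : V, restK G M K L (s v) = (v : EmbSp G M K L)) ∧
    (τ = TopologicalSpace.coinduced (restK G M K L) inferInstance) ∧
    (∀ f : EmbSp G M K L, ∃ V ∈ @nhds _ τ f,
      ∃ e : (V × {g : G // ∀ x ∈ L, g • x = x}) ≃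
            {g : {g : G // ∀ x ∈ K, g • x = x} // restK G M K L g ∈ V},
        @IsHomeomorph _ _
          (@instTopologicalSpaceProd _ _ (τ.induced Subtype.val) inferInstance)
          inferInstance e ∧
        (∀ q : V × {g : G // ∀ x ∈ L, g • x = x},
          restK G M K L (e q).val = (q.1 : EmbSp G M K L)) ∧
        (∀ (v : V) (h h' : {g : G // ∀ x ∈ L, g • x = x}),
          ((e (v, ⟨h.val * h'.val, fun x hx => by
              rw [mul_smul, h'.property x hx, h.property x hx]⟩)).val : G)
            = ((e (v, h)).val : G) * h'.val)) := by
  let _ := τ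
  have hsecs : ∀ f, HasLocalSectionAt (restK G M K L) f := hasLocalSectionAt_restK hadm hsec
  refine ⟨hsecs, eq_coinduced_of_forall_hasLocalSectionAt (continuous_restK hadm) hsecs,
    fun f => ?_⟩
  obtain ⟨V, hV, s, hsc, hs⟩ := hsecs f
  exact ⟨V, hV, sectionTrivialization hKL s hs,
    isHomeomorph_sectionTrivialization hadm hKL hsc hs, restK_sectionTrivialization hKL s hs,
    fun v h h' => (mul_assoc _ _ _).symm⟩
end
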